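/- arXiv:1911.10894 — 4 statements merged into one kernel-verified Lean document; each statement's English description precedes it below -/
import Mathlib

section
/- Under the stated setup, if |λ₁| < |λ₂| then lim_{h→∞} CD⁺(h)/λ₂ʰ = α·D₅; equivalently, the cross-codifference CD(X₁(t),X₂(t+h)) is asymptotically α·D₅·λ₂ʰ as h → ∞. -/
open MeasureTheory Filter Topology

/-- The signed power `x^⟨p⟩ = |x|^p · sign x`. -/
noncomputable def spow (x p : ℝ) : ℝ := |x| ^ p * Real.sign x

/-- The unit sphere `S₂ ⊆ ℝ²`. -/
abbrev Sphere2 : Type := {s : ℝ × ℝ // s.1 ^ 2 + s.2 ^ 2 = 1}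

noncomputable def A3 (a1 a2 a3 a4 l1 l2 : ℝ) (j : ℕ) (s : Sphere2) : ℝ :=
  (-(l1 ^ j * a3 * s.1.1) + l2 * l1 ^ j * s.1.2 - l1 ^ j * a4 * s.1.2) / (l2 - l1)

noncomputable def B3 (a1 a2 a3 a4 l1 l2 : ℝ) (j : ℕ) (s : Sphere2) : ℝ :=
  (l2 ^ j * a3 * s.1.1 - l1 * l2 ^ j * s.1.2 + l2 ^ j * a4 * s.1.2) / (l2 - l1)

noncomputable def C3 (a1 a2 a3 a4 l1 l2 : ℝ) (j : ℕ) (s : Sphere2) : ℝ :=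
  (l1 ^ j * (l2 * s.1.1 - a1 * s.1.1 - a2 * s.1.2)
    + l2 ^ j * (-(l1 * s.1.1) + a1 * s.1.1 + a2 * s.1.2)) / (l2 - l1)

/-- The cross-codifference `CD(X₁(t), X₂(t+h))` of the bidimensional α-stable AR(1) model. -/
noncomputable def CDpos (Γ : Measure Sphere2) (α a1 a2 a3 a4 l1 l2 : ℝ) (h : ℕ) : ℝ :=
  ∑' j : ℕ, ∫ s,
    (|l1 ^ h * A3 a1 a2 a3 a4 l1 l2 j s + l2 ^ h * B3 a1 a2 a3 a4 l1 l2 j s| ^ α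
      + |C3 a1 a2 a3 a4 l1 l2 j s| ^ α
      - |C3 a1 a2 a3 a4 l1 l2 j s - (l1 ^ h * A3 a1 a2 a3 a4 l1 l2 j s + l2 ^ h * B3 a1 a2 a3 a4 l1 l2 j s)| ^ α) ∂Γ

/-- The cross-covariation `CV(X₁(t), X₂(t+h))` of the bidimensional α-stable AR(1) model. -/
noncomputable def CVpos (Γ : Measure Sphere2) (α a1 a2 a3 a4 l1 l2 : ℝ) (h : ℕ) : ℝ :=
  ∑' j : ℕ, ∫ s,
    C3 a1 a2 a3 a4 l1 l2 j s * spow (l1 ^ h * A3 a1 a2 a3 a4 l1 l2 j s + l2 ^ h * B3 a1 a2 a3 a4 l1 l2 j s) (α - 1) ∂Γ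

noncomputable def D4 (Γ : Measure Sphere2) (α a1 a2 a3 a4 l1 l2 : ℝ) : ℝ :=
  ∑' j : ℕ, ∫ s, A3 a1 a2 a3 a4 l1 l2 j s * spow (C3 a1 a2 a3 a4 l1 l2 j s) (α - 1) ∂Γ

noncomputable def D5 (Γ : Measure Sphere2) (α a1 a2 a3 a4 l1 l2 : ℝ) : ℝ :=
  ∑' j : ℕ, ∫ s, B3 a1 a2 a3 a4 l1 l2 j s * spow (C3 a1 a2 a3 a4 l1 l2 j s) (α - 1) ∂Γ

noncomputable def D7 (Γ : Measure Sphere2) (α a1 a2 a3 a4 l1 l2 : ℝ) : ℝ :=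
  ∑' j : ℕ, ∫ s, C3 a1 a2 a3 a4 l1 l2 j s * spow (A3 a1 a2 a3 a4 l1 l2 j s) (α - 1) ∂Γ

noncomputable def D8 (Γ : Measure Sphere2) (α a1 a2 a3 a4 l1 l2 : ℝ) : ℝ :=
  ∑' j : ℕ, ∫ s, C3 a1 a2 a3 a4 l1 l2 j s * spow (B3 a1 a2 a3 a4 l1 l2 j s) (α - 1) ∂Γ

/-! ### Auxiliary lemmas -/

lemma spow_deriv_eq {p : ℝ} (x : ℝ) : p * |x| ^ (p - 2) * x = p * spow x (p - 1) := by
  rcases eq_or_ne x 0 with rfl | hx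
  · simp [spow]
  · have : |x| ^ (p - 2) * x = spow x (p - 1) := by
      rw [spow, show p - 1 = (p - 2) + 1 by ring,
        Real.rpow_add_one (by positivity : |x| ≠ 0)]
      rcases hx.lt_or_gt with h | h
      · rw [Real.sign_of_neg h, abs_of_neg h]; ring
      · rw [Real.sign_of_pos h, abs_of_pos h]; ring
    rw [mul_assoc, this]

lemma spow_hasDerivAt {α : ℝ} (hα : 1 < α) (t : ℝ) :
    HasDerivAt (fun x : ℝ => |x| ^ α) (α * spow t (α - 1)) t := by
  have := hasDerivAt_abs_rpow t hα
  rwa [spow_deriv_eq] at this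

lemma abs_spow_le (x p : ℝ) : |spow x p| ≤ |x| ^ p := by
  rw [spow, abs_mul, abs_of_nonneg (Real.rpow_nonneg (abs_nonneg x) p)]
  rcases lt_trichotomy x 0 with h | rfl | h
  · simp [Real.sign_of_neg h]
  · simp [Real.rpow_nonneg]
  · simp [Real.sign_of_pos h]

/-- MVT bound for `|·|^α`. -/
lemma abs_rpow_sub_abs_rpow_le {α : ℝ} (hα : 1 < α) (x y : ℝ) :
    |(|x| ^ α - |y| ^ α)| ≤ α * (|x| + |y|) ^ (α - 1) * |x - y| := by
  have key : ∀ t ∈ Set.uIcc y x, ‖α * spow t (α - 1)‖ ≤ α * (|x| + |y|) ^ (α - 1) := by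
    intro t ht
    have htb : |t| ≤ |x| + |y| := by
      rcases Set.mem_uIcc.mp ht with ⟨h1, h2⟩ | ⟨h1, h2⟩ <;>
        refine abs_le.2 ⟨?_, ?_⟩ <;>
        nlinarith [le_abs_self x, neg_abs_le x, le_abs_self y, neg_abs_le y]
    have h2 : |t| ^ (α - 1) ≤ (|x| + |y|) ^ (α - 1) :=
      Real.rpow_le_rpow (abs_nonneg t) htb (by linarith)
    calc ‖α * spow t (α - 1)‖ = |α| * |spow t (α - 1)| := abs_mul _ _
      _ ≤ α * |t| ^ (α - 1) := by
          rw [abs_of_pos (by linarith : (0:ℝ) < α)]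
          exact mul_le_mul_of_nonneg_left (abs_spow_le t (α - 1)) (by linarith)
      _ ≤ α * (|x| + |y|) ^ (α - 1) := by
          exact mul_le_mul_of_nonneg_left h2 (by linarith)
  have := Convex.norm_image_sub_le_of_norm_hasDerivWithin_le
    (f := fun t : ℝ => |t| ^ α) (f' := fun t => α * spow t (α - 1)) (s := Set.uIcc y x)
    (fun t _ => (spow_hasDerivAt hα t).hasDerivWithinAt) key (convex_uIcc y x)
    Set.left_mem_uIcc Set.right_mem_uIcc
  simpa [Real.norm_eq_abs] using this

open Asymptotics in
/-- Pointwise limit of the codifference summand divided by `l2 ^ h`. -/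
lemma key_tendsto {α l1 l2 : ℝ} (hα1 : 1 < α) (habs2 : |l2| < 1) (hlt : |l1| < |l2|)
    (A B C : ℝ) :
    Tendsto (fun h : ℕ =>
      (|l1 ^ h * A + l2 ^ h * B| ^ α + |C| ^ α - |C - (l1 ^ h * A + l2 ^ h * B)| ^ α) / l2 ^ h)
      atTop (𝓝 (α * (B * spow C (α - 1)))) := by
  have hl2pos : 0 < |l2| := (abs_nonneg l1).trans_lt hlt
  have hl2ne : l2 ≠ 0 := fun h => by simp [h] at hl2pos
  have habs1 : |l1| < 1 := hlt.trans habs2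
  set ε : ℕ → ℝ := fun h => l1 ^ h * A + l2 ^ h * B with hεdef
  have hε0 : Tendsto ε atTop (𝓝 0) := by
    have := ((tendsto_pow_atTop_nhds_zero_of_abs_lt_one habs1).mul_const A).add
      ((tendsto_pow_atTop_nhds_zero_of_abs_lt_one habs2).mul_const B)
    simpa using this
  have hbound : ∀ h : ℕ, |ε h| ≤ (|A| + |B|) * |l2| ^ h := by
    intro h
    calc |ε h| ≤ |l1 ^ h * A| + |l2 ^ h * B| := abs_add_le _ _
      _ = |l1| ^ h * |A| + |l2| ^ h * |B| := by rw [abs_mul, abs_mul, abs_pow, abs_pow]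
      _ ≤ |l2| ^ h * |A| + |l2| ^ h * |B| := by
          have := pow_le_pow_left₀ (abs_nonneg l1) hlt.le h
          nlinarith [abs_nonneg A]
      _ = (|A| + |B|) * |l2| ^ h := by ring
  have hratio : Tendsto (fun h : ℕ => ε h / l2 ^ h) atTop (𝓝 B) := by
    have h1 : Tendsto (fun h : ℕ => (l1 / l2) ^ h * A + B) atTop (𝓝 (0 * A + B)) := by
      refine Tendsto.add_const B ?_
      exact (tendsto_pow_atTop_nhds_zero_of_abs_lt_one
        (by rw [abs_div]; exact (div_lt_one hl2pos).2 hlt)).mul_const A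
    rw [zero_mul, zero_add] at h1
    refine h1.congr fun h => ?_
    have hne : (l2 : ℝ) ^ h ≠ 0 := pow_ne_zero _ hl2ne
    simp only [hεdef, div_pow]
    field_simp
  have term1 : Tendsto (fun h : ℕ => |ε h| ^ α / l2 ^ h) atTop (𝓝 0) := by
    have hg : Tendsto (fun h : ℕ => |ε h| ^ (α - 1) * (|A| + |B|)) atTop (𝓝 0) := by
      have hc : Continuous (fun x : ℝ => |x| ^ (α - 1)) :=
        (Real.continuous_rpow_const (by linarith)).comp continuous_abs
      have := ((hc.tendsto 0).comp hε0).mul_const (|A| + |B|)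
      simpa [Real.zero_rpow (by linarith : α - 1 ≠ 0)] using this
    refine squeeze_zero_norm (fun h => ?_) hg
    rcases eq_or_ne (ε h) 0 with hz | hz
    · simp [hz, Real.zero_rpow (by linarith : α ≠ 0)]
      positivity
    · have hεpos : 0 < |ε h| := abs_pos.2 hz
      have hsplit : |ε h| ^ α = |ε h| ^ (α - 1) * |ε h| := by
        rw [← Real.rpow_add_one (ne_of_gt hεpos)]; ring_nf
      rw [Real.norm_eq_abs, abs_div, abs_of_nonneg (Real.rpow_nonneg (abs_nonneg _) _),
        abs_pow, div_le_iff₀ (pow_pos hl2pos h), hsplit]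
      calc |ε h| ^ (α - 1) * |ε h| ≤ |ε h| ^ (α - 1) * ((|A| + |B|) * |l2| ^ h) :=
            mul_le_mul_of_nonneg_left (hbound h) (Real.rpow_nonneg (abs_nonneg _) _)
        _ = |ε h| ^ (α - 1) * (|A| + |B|) * |l2| ^ h := by ring
  set d : ℝ := α * spow C (α - 1) with hd
  have hφ : HasDerivAt (fun e : ℝ => |C| ^ α - |C - e| ^ α) d 0 := by
    have hinner : HasDerivAt (fun e : ℝ => C - e) (-1) 0 := (hasDerivAt_id 0).const_sub C
    have houter := (spow_hasDerivAt hα1 (C - 0)).comp 0 hinner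
    have := (hasDerivAt_const (0:ℝ) (|C| ^ α)).sub houter
    simpa [hd, Pi.sub_def, Function.comp_def] using this
  have hlo : (fun h : ℕ => (|C| ^ α - |C - ε h| ^ α) - ε h * d) =o[atTop] ε := by
    have h1 := (hasDerivAt_iff_isLittleO.1 hφ)
    have h2 := h1.comp_tendsto hε0
    simp only [Function.comp_def, sub_zero, smul_eq_mul] at h2
    refine h2.congr' ?_ (by rfl)
    filter_upwards with h
    simp [sub_self, mul_comm]
  have hObig : ε =O[atTop] (fun h : ℕ => l2 ^ h) := by
    rw [isBigO_iff]
    exact ⟨|A| + |B|, by filter_upwards with h; simpa [abs_pow] using hbound h⟩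
  have hdiv0 : Tendsto (fun h : ℕ => ((|C| ^ α - |C - ε h| ^ α) - ε h * d) / l2 ^ h)
      atTop (𝓝 0) := (hlo.trans_isBigO hObig).tendsto_div_nhds_zero
  have hmain : Tendsto (fun h : ℕ => ε h * d / l2 ^ h) atTop (𝓝 (B * d)) := by
    have := hratio.mul_const d
    refine this.congr fun h => ?_
    ring
  have term2 : Tendsto (fun h : ℕ => (|C| ^ α - |C - ε h| ^ α) / l2 ^ h) atTop (𝓝 (B * d)) := by
    have := hdiv0.add hmain
    rw [zero_add] at this
    refine this.congr fun h => ?_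
    rw [← add_div, sub_add_cancel]
  have hsum := term1.add term2
  rw [zero_add] at hsum
  have hval : B * d = α * (B * spow C (α - 1)) := by rw [hd]; ring
  rw [← hval]
  exact hsum.congr fun h => by rw [← add_div]; simp only [hεdef]; ring_nf

lemma Fbound_aux {α : ℝ} (hα1 : 1 < α) {u v M e C : ℝ} (hu0 : 0 < u) (hu1 : u ≤ 1)
    (hv0 : 0 ≤ v) (hM : 0 ≤ M) (he : |e| ≤ M * u * v) (hC : |C| ≤ M * v) :
    |(|e| ^ α + |C| ^ α - |C - e| ^ α)| / u ≤ (1 + α * 3 ^ (α - 1)) * (M ^ α * v ^ α) := by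
  have hα0 : (0:ℝ) < α := by linarith
  have hmv : (0:ℝ) ≤ M * v := mul_nonneg hM hv0
  have huv : M * u * v ≤ M * v := by nlinarith
  have hu' : u ^ α ≤ u := by
    calc u ^ α ≤ u ^ (1:ℝ) := Real.rpow_le_rpow_of_exponent_ge hu0 hu1 (by linarith)
      _ = u := Real.rpow_one u
  have h1 : |e| ^ α ≤ M ^ α * v ^ α * u := by
    calc |e| ^ α ≤ (M * u * v) ^ α := Real.rpow_le_rpow (abs_nonneg e) he hα0.le
      _ = M ^ α * u ^ α * v ^ α := by
          rw [Real.mul_rpow (mul_nonneg hM hu0.le) hv0, Real.mul_rpow hM hu0.le]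
      _ ≤ M ^ α * u * v ^ α :=
          mul_le_mul_of_nonneg_right
            (mul_le_mul_of_nonneg_left hu' (Real.rpow_nonneg hM α))
            (Real.rpow_nonneg hv0 α)
      _ = M ^ α * v ^ α * u := by ring
  have h3 : |C| + |C - e| ≤ 3 * (M * v) := by
    have := abs_sub C e
    have he' : |e| ≤ M * v := he.trans huv
    nlinarith
  have h2 : |(|C| ^ α - |C - e| ^ α)| ≤ α * (3 * (M * v)) ^ (α - 1) * (M * u * v) := by
    calc |(|C| ^ α - |C - e| ^ α)| ≤ α * (|C| + |C - e|) ^ (α - 1) * |C - (C - e)| :=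
          abs_rpow_sub_abs_rpow_le hα1 C (C - e)
      _ = α * (|C| + |C - e|) ^ (α - 1) * |e| := by rw [sub_sub_cancel]
      _ ≤ α * (3 * (M * v)) ^ (α - 1) * (M * u * v) := by
          have hX : (|C| + |C - e|) ^ (α - 1) ≤ (3 * (M * v)) ^ (α - 1) :=
            Real.rpow_le_rpow (by positivity) h3 (by linarith)
          exact mul_le_mul (mul_le_mul_of_nonneg_left hX hα0.le) he (abs_nonneg e)
            (by positivity)
  have hsplit : (M * v) ^ (α - 1) * (M * v) = (M * v) ^ α := by
    nth_rewrite 2 [show α = (α - 1) + 1 by ring]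
    rw [Real.rpow_add' hmv (by linarith), Real.rpow_one]
  have h2' : α * (3 * (M * v)) ^ (α - 1) * (M * u * v) = α * 3 ^ (α - 1) * (M ^ α * v ^ α) * u := by
    rw [Real.mul_rpow (by norm_num) hmv, ← Real.mul_rpow hM hv0]
    linear_combination (α * 3 ^ (α - 1) * u) * hsplit
  have htri : |(|e| ^ α + |C| ^ α - |C - e| ^ α)| ≤ |e| ^ α + |(|C| ^ α - |C - e| ^ α)| := by
    have h0 : (0:ℝ) ≤ |e| ^ α := Real.rpow_nonneg (abs_nonneg e) α
    calc |(|e| ^ α + |C| ^ α - |C - e| ^ α)| = |(|e| ^ α + (|C| ^ α - |C - e| ^ α))| := by ring_nf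
      _ ≤ |(|e| ^ α)| + |(|C| ^ α - |C - e| ^ α)| := abs_add_le _ _
      _ = |e| ^ α + |(|C| ^ α - |C - e| ^ α)| := by rw [abs_of_nonneg h0]
  rw [div_le_iff₀ hu0]
  calc |(|e| ^ α + |C| ^ α - |C - e| ^ α)| ≤ |e| ^ α + |(|C| ^ α - |C - e| ^ α)| := htri
    _ ≤ M ^ α * v ^ α * u + α * 3 ^ (α - 1) * (M ^ α * v ^ α) * u := by
        rw [← h2'] at *; exact add_le_add h1 h2
    _ = (1 + α * 3 ^ (α - 1)) * (M ^ α * v ^ α) * u := by ring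

lemma comb_bound {D : ℝ} (hD : 0 < D) (p q x y : ℝ) (hx : |x| ≤ 1) (hy : |y| ≤ 1) :
    |p * x + q * y| / D ≤ (|p| + |q|) / D := by
  gcongr
  calc |p * x + q * y| ≤ |p * x| + |q * y| := abs_add_le _ _
    _ = |p| * |x| + |q| * |y| := by rw [abs_mul, abs_mul]
    _ ≤ |p| + |q| := by nlinarith [abs_nonneg p, abs_nonneg q]

instance : OpensMeasurableSpace Sphere2 :=
  inferInstanceAs (OpensMeasurableSpace ({s : ℝ × ℝ | s.1 ^ 2 + s.2 ^ 2 = 1} : Set (ℝ × ℝ)))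

set_option maxHeartbeats 1000000 in
theorem CD_pos_asymptotic_case_II
    (Γ : Measure Sphere2) [IsFiniteMeasure Γ]
    (α a1 a2 a3 a4 l1 l2 : ℝ) (hα1 : 1 < α) (hα2 : α < 2)
    (hl1 : l1 ^ 2 - (a1 + a4) * l1 + (a1 * a4 - a2 * a3) = 0)
    (hl2 : l2 ^ 2 - (a1 + a4) * l2 + (a1 * a4 - a2 * a3) = 0)
    (hne : l1 ≠ l2) (habs1 : |l1| < 1) (habs2 : |l2| < 1)
    (hlt : |l1| < |l2|) :
    Tendsto (fun h : ℕ => CDpos Γ α a1 a2 a3 a4 l1 l2 h / l2 ^ h) atTop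
      (𝓝 (α * D5 Γ α a1 a2 a3 a4 l1 l2)) := by
  have hα0 : (0:ℝ) < α := by linarith
  have hl2pos : 0 < |l2| := (abs_nonneg l1).trans_lt hlt
  have hl2ne : l2 ≠ 0 := fun h => by simp [h] at hl2pos
  have hdne : l2 - l1 ≠ 0 := sub_ne_zero.2 (Ne.symm hne)
  have hdpos : 0 < |l2 - l1| := abs_pos.2 hdne
  set r : ℝ := |l2| with hrdef
  have hr1 : r < 1 := habs2
  -- sphere coordinate bounds
  have hs1 : ∀ s : Sphere2, |s.1.1| ≤ 1 := by
    intro s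
    have hp := s.2
    exact abs_le.2 ⟨by nlinarith [sq_nonneg s.1.2], by nlinarith [sq_nonneg s.1.2]⟩
  have hs2 : ∀ s : Sphere2, |s.1.2| ≤ 1 := by
    intro s
    have hp := s.2
    exact abs_le.2 ⟨by nlinarith [sq_nonneg s.1.1], by nlinarith [sq_nonneg s.1.1]⟩
  -- uniform bounds on A3, B3, C3
  set m : ℝ := (|a3| + |l2 - a4|) / |l2 - l1| + (|a3| + |a4 - l1|) / |l2 - l1|
      + ((|l2 - a1| + |a2|) / |l2 - l1| + (|a1 - l1| + |a2|) / |l2 - l1|) with hmdef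
  have hm0 : 0 ≤ m := by positivity
  have hA : ∀ (j : ℕ) (s : Sphere2), |A3 a1 a2 a3 a4 l1 l2 j s| ≤ m * r ^ j := by
    intro j s
    have e1 : A3 a1 a2 a3 a4 l1 l2 j s
        = l1 ^ j * (((-a3) * s.1.1 + (l2 - a4) * s.1.2) / (l2 - l1)) := by
      unfold A3; ring
    have h2 := comb_bound hdpos (-a3) (l2 - a4) s.1.1 s.1.2 (hs1 s) (hs2 s)
    rw [abs_neg] at h2
    calc |A3 a1 a2 a3 a4 l1 l2 j s|
        = |l1| ^ j * |((-a3) * s.1.1 + (l2 - a4) * s.1.2) / (l2 - l1)| := by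
          rw [e1, abs_mul, abs_pow]
      _ ≤ r ^ j * ((|a3| + |l2 - a4|) / |l2 - l1|) := by
          rw [abs_div]
          exact mul_le_mul (pow_le_pow_left₀ (abs_nonneg l1) hlt.le j) h2
            (by positivity) (by positivity)
      _ ≤ m * r ^ j := by
          have hle : (|a3| + |l2 - a4|) / |l2 - l1| ≤ m := by
            rw [hmdef]
            have p1 : (0:ℝ) ≤ (|a3| + |a4 - l1|) / |l2 - l1| := by positivity
            have p2 : (0:ℝ) ≤ (|l2 - a1| + |a2|) / |l2 - l1| := by positivity
            have p3 : (0:ℝ) ≤ (|a1 - l1| + |a2|) / |l2 - l1| := by positivity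
            have p4 : (0:ℝ) ≤ (|a3| + |l2 - a4|) / |l2 - l1| := by positivity
            linarith
          calc r ^ j * ((|a3| + |l2 - a4|) / |l2 - l1|)
              = (|a3| + |l2 - a4|) / |l2 - l1| * r ^ j := mul_comm _ _
            _ ≤ m * r ^ j := mul_le_mul_of_nonneg_right hle (pow_nonneg hl2pos.le j)
  have hB : ∀ (j : ℕ) (s : Sphere2), |B3 a1 a2 a3 a4 l1 l2 j s| ≤ m * r ^ j := by
    intro j s
    have e1 : B3 a1 a2 a3 a4 l1 l2 j s
        = l2 ^ j * ((a3 * s.1.1 + (a4 - l1) * s.1.2) / (l2 - l1)) := by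
      unfold B3; ring
    have h2 := comb_bound hdpos a3 (a4 - l1) s.1.1 s.1.2 (hs1 s) (hs2 s)
    calc |B3 a1 a2 a3 a4 l1 l2 j s|
        = |l2| ^ j * |(a3 * s.1.1 + (a4 - l1) * s.1.2) / (l2 - l1)| := by
          rw [e1, abs_mul, abs_pow]
      _ ≤ r ^ j * ((|a3| + |a4 - l1|) / |l2 - l1|) := by
          rw [abs_div]
          exact mul_le_mul_of_nonneg_left h2 (by positivity)
      _ ≤ m * r ^ j := by
          have hle : (|a3| + |a4 - l1|) / |l2 - l1| ≤ m := by
            rw [hmdef]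
            have p1 : (0:ℝ) ≤ (|a3| + |a4 - l1|) / |l2 - l1| := by positivity
            have p2 : (0:ℝ) ≤ (|l2 - a1| + |a2|) / |l2 - l1| := by positivity
            have p3 : (0:ℝ) ≤ (|a1 - l1| + |a2|) / |l2 - l1| := by positivity
            have p4 : (0:ℝ) ≤ (|a3| + |l2 - a4|) / |l2 - l1| := by positivity
            linarith
          calc r ^ j * ((|a3| + |a4 - l1|) / |l2 - l1|)
              = (|a3| + |a4 - l1|) / |l2 - l1| * r ^ j := mul_comm _ _
            _ ≤ m * r ^ j := mul_le_mul_of_nonneg_right hle (pow_nonneg hl2pos.le j)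
  have hC : ∀ (j : ℕ) (s : Sphere2), |C3 a1 a2 a3 a4 l1 l2 j s| ≤ m * r ^ j := by
    intro j s
    have e1 : C3 a1 a2 a3 a4 l1 l2 j s
        = l1 ^ j * (((l2 - a1) * s.1.1 + (-a2) * s.1.2) / (l2 - l1))
          + l2 ^ j * (((a1 - l1) * s.1.1 + a2 * s.1.2) / (l2 - l1)) := by
      unfold C3; ring
    have h2 := comb_bound hdpos (l2 - a1) (-a2) s.1.1 s.1.2 (hs1 s) (hs2 s)
    rw [abs_neg] at h2
    have h3 := comb_bound hdpos (a1 - l1) a2 s.1.1 s.1.2 (hs1 s) (hs2 s)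
    calc |C3 a1 a2 a3 a4 l1 l2 j s|
        ≤ |l1| ^ j * |((l2 - a1) * s.1.1 + (-a2) * s.1.2) / (l2 - l1)|
          + |l2| ^ j * |((a1 - l1) * s.1.1 + a2 * s.1.2) / (l2 - l1)| := by
          rw [e1]
          refine (abs_add_le _ _).trans ?_
          rw [abs_mul, abs_mul, abs_pow, abs_pow]
      _ ≤ r ^ j * ((|l2 - a1| + |a2|) / |l2 - l1|)
          + r ^ j * ((|a1 - l1| + |a2|) / |l2 - l1|) := by
          rw [abs_div, abs_div]
          exact add_le_add
            (mul_le_mul (pow_le_pow_left₀ (abs_nonneg l1) hlt.le j) h2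
              (by positivity) (by positivity))
            (mul_le_mul_of_nonneg_left h3 (by positivity))
      _ ≤ m * r ^ j := by
          have hle : (|l2 - a1| + |a2|) / |l2 - l1| + (|a1 - l1| + |a2|) / |l2 - l1| ≤ m := by
            rw [hmdef]
            have p1 : (0:ℝ) ≤ (|a3| + |a4 - l1|) / |l2 - l1| := by positivity
            have p2 : (0:ℝ) ≤ (|l2 - a1| + |a2|) / |l2 - l1| := by positivity
            have p3 : (0:ℝ) ≤ (|a1 - l1| + |a2|) / |l2 - l1| := by positivity
            have p4 : (0:ℝ) ≤ (|a3| + |l2 - a4|) / |l2 - l1| := by positivity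
            linarith
          calc r ^ j * ((|l2 - a1| + |a2|) / |l2 - l1|)
              + r ^ j * ((|a1 - l1| + |a2|) / |l2 - l1|)
              = ((|l2 - a1| + |a2|) / |l2 - l1| + (|a1 - l1| + |a2|) / |l2 - l1|) * r ^ j := by
                ring
            _ ≤ m * r ^ j := mul_le_mul_of_nonneg_right hle (pow_nonneg hl2pos.le j)
  -- constants
  set M : ℝ := 2 * m with hMdef
  have hM0 : 0 ≤ M := by positivity
  set K : ℝ := 1 + α * 3 ^ (α - 1) with hKdef
  have hK0 : 0 ≤ K := by rw [hKdef]; positivity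
  set q : ℝ := r ^ α with hqdef
  have hq0 : 0 ≤ q := Real.rpow_nonneg hl2pos.le α
  have hq1 : q < 1 := Real.rpow_lt_one hl2pos.le hr1 hα0
  have hvα : ∀ j : ℕ, ((r : ℝ) ^ j) ^ α = q ^ j := by
    intro j
    rw [hqdef, ← Real.rpow_natCast r j, ← Real.rpow_natCast (r ^ α) j,
      ← Real.rpow_mul hl2pos.le, ← Real.rpow_mul hl2pos.le, mul_comm]
  -- the key pointwise bound
  have hptbound : ∀ (h j : ℕ) (s : Sphere2),
      ‖(|l1 ^ h * A3 a1 a2 a3 a4 l1 l2 j s + l2 ^ h * B3 a1 a2 a3 a4 l1 l2 j s| ^ α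
        + |C3 a1 a2 a3 a4 l1 l2 j s| ^ α
        - |C3 a1 a2 a3 a4 l1 l2 j s
          - (l1 ^ h * A3 a1 a2 a3 a4 l1 l2 j s + l2 ^ h * B3 a1 a2 a3 a4 l1 l2 j s)| ^ α)
        / l2 ^ h‖ ≤ K * M ^ α * q ^ j := by
    intro h j s
    have hu0 : (0:ℝ) < r ^ h := pow_pos hl2pos h
    have hu1 : r ^ h ≤ 1 := pow_le_one₀ hl2pos.le hr1.le
    have hv0 : (0:ℝ) ≤ r ^ j := pow_nonneg hl2pos.le j
    have he : |l1 ^ h * A3 a1 a2 a3 a4 l1 l2 j s + l2 ^ h * B3 a1 a2 a3 a4 l1 l2 j s|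
        ≤ M * r ^ h * r ^ j := by
      calc |l1 ^ h * A3 a1 a2 a3 a4 l1 l2 j s + l2 ^ h * B3 a1 a2 a3 a4 l1 l2 j s|
          ≤ |l1 ^ h * A3 a1 a2 a3 a4 l1 l2 j s| + |l2 ^ h * B3 a1 a2 a3 a4 l1 l2 j s| :=
            abs_add_le _ _
        _ = |l1| ^ h * |A3 a1 a2 a3 a4 l1 l2 j s| + |l2| ^ h * |B3 a1 a2 a3 a4 l1 l2 j s| := by
            rw [abs_mul, abs_mul, abs_pow, abs_pow]
        _ ≤ r ^ h * (m * r ^ j) + r ^ h * (m * r ^ j) := by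
            refine add_le_add ?_ ?_
            · exact mul_le_mul (pow_le_pow_left₀ (abs_nonneg l1) hlt.le h) (hA j s)
                (abs_nonneg _) (by positivity)
            · exact mul_le_mul_of_nonneg_left (hB j s) (by positivity)
        _ = M * r ^ h * r ^ j := by rw [hMdef]; ring
    have hCb : |C3 a1 a2 a3 a4 l1 l2 j s| ≤ M * r ^ j := by
      refine (hC j s).trans ?_
      rw [hMdef]
      nlinarith [pow_nonneg hl2pos.le j]
    have := Fbound_aux hα1 hu0 hu1 hv0 hM0 he hCb
    rw [Real.norm_eq_abs, abs_div, abs_pow, ← hrdef]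
    calc _ ≤ (1 + α * 3 ^ (α - 1)) * (M ^ α * (r ^ j) ^ α) := this
      _ = K * M ^ α * q ^ j := by rw [hKdef, hvα j]; ring
  -- continuity / measurability
  have hcontA : ∀ j : ℕ, Continuous (fun s : Sphere2 => A3 a1 a2 a3 a4 l1 l2 j s) := by
    intro j; unfold A3; fun_prop
  have hcontB : ∀ j : ℕ, Continuous (fun s : Sphere2 => B3 a1 a2 a3 a4 l1 l2 j s) := by
    intro j; unfold B3; fun_prop
  have hcontC : ∀ j : ℕ, Continuous (fun s : Sphere2 => C3 a1 a2 a3 a4 l1 l2 j s) := by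
    intro j; unfold C3; fun_prop
  have hcontabs : Continuous (fun x : ℝ => |x| ^ α) :=
    (Real.continuous_rpow_const hα0.le).comp continuous_abs
  have hmeas : ∀ h j : ℕ, AEStronglyMeasurable
      (fun s : Sphere2 =>
        (|l1 ^ h * A3 a1 a2 a3 a4 l1 l2 j s + l2 ^ h * B3 a1 a2 a3 a4 l1 l2 j s| ^ α
          + |C3 a1 a2 a3 a4 l1 l2 j s| ^ α
          - |C3 a1 a2 a3 a4 l1 l2 j s
            - (l1 ^ h * A3 a1 a2 a3 a4 l1 l2 j s + l2 ^ h * B3 a1 a2 a3 a4 l1 l2 j s)| ^ α)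
          / l2 ^ h) Γ := by
    intro h j
    refine Continuous.aestronglyMeasurable ?_
    have hε : Continuous (fun s : Sphere2 =>
        l1 ^ h * A3 a1 a2 a3 a4 l1 l2 j s + l2 ^ h * B3 a1 a2 a3 a4 l1 l2 j s) :=
      ((continuous_const.mul (hcontA j)).add (continuous_const.mul (hcontB j)))
    exact (((hcontabs.comp hε).add (hcontabs.comp (hcontC j))).sub
      (hcontabs.comp ((hcontC j).sub hε))).div_const _
  -- per-j integral convergence
  have hjconv : ∀ j : ℕ, Tendsto (fun h : ℕ => ∫ s,
      (|l1 ^ h * A3 a1 a2 a3 a4 l1 l2 j s + l2 ^ h * B3 a1 a2 a3 a4 l1 l2 j s| ^ α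
        + |C3 a1 a2 a3 a4 l1 l2 j s| ^ α
        - |C3 a1 a2 a3 a4 l1 l2 j s
          - (l1 ^ h * A3 a1 a2 a3 a4 l1 l2 j s + l2 ^ h * B3 a1 a2 a3 a4 l1 l2 j s)| ^ α)
        / l2 ^ h ∂Γ) atTop
      (𝓝 (∫ s, α * (B3 a1 a2 a3 a4 l1 l2 j s * spow (C3 a1 a2 a3 a4 l1 l2 j s) (α - 1)) ∂Γ)) := by
    intro j
    refine MeasureTheory.tendsto_integral_of_dominated_convergence
      (fun _ => K * M ^ α * q ^ j) (hmeas · j) (integrable_const _) ?_ ?_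
    · intro h
      filter_upwards with s
      exact hptbound h j s
    · filter_upwards with s
      exact key_tendsto hα1 habs2 hlt _ _ _
  -- norm bound on each integral
  have hintbound : ∀ h j : ℕ, ‖∫ s,
      (|l1 ^ h * A3 a1 a2 a3 a4 l1 l2 j s + l2 ^ h * B3 a1 a2 a3 a4 l1 l2 j s| ^ α
        + |C3 a1 a2 a3 a4 l1 l2 j s| ^ α
        - |C3 a1 a2 a3 a4 l1 l2 j s
          - (l1 ^ h * A3 a1 a2 a3 a4 l1 l2 j s + l2 ^ h * B3 a1 a2 a3 a4 l1 l2 j s)| ^ α)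
        / l2 ^ h ∂Γ‖ ≤ K * M ^ α * q ^ j * (Γ Set.univ).toReal := by
    intro h j
    refine MeasureTheory.norm_integral_le_of_norm_le_const ?_
    filter_upwards with s
    exact hptbound h j s
  -- assemble with dominated convergence for sums
  have hsummable : Summable (fun j : ℕ => K * M ^ α * q ^ j * (Γ Set.univ).toReal) := by
    have : Summable (fun j : ℕ => q ^ j) := summable_geometric_of_lt_one hq0 hq1
    simpa [mul_comm, mul_assoc] using (this.mul_left (K * M ^ α)).mul_right (Γ Set.univ).toReal
  have hfinal := tendsto_tsum_of_dominated_convergence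
    (f := fun (h : ℕ) (j : ℕ) => ∫ s,
      (|l1 ^ h * A3 a1 a2 a3 a4 l1 l2 j s + l2 ^ h * B3 a1 a2 a3 a4 l1 l2 j s| ^ α
        + |C3 a1 a2 a3 a4 l1 l2 j s| ^ α
        - |C3 a1 a2 a3 a4 l1 l2 j s
          - (l1 ^ h * A3 a1 a2 a3 a4 l1 l2 j s + l2 ^ h * B3 a1 a2 a3 a4 l1 l2 j s)| ^ α)
        / l2 ^ h ∂Γ)
    (g := fun j => ∫ s, α * (B3 a1 a2 a3 a4 l1 l2 j s * spow (C3 a1 a2 a3 a4 l1 l2 j s) (α - 1)) ∂Γ)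
    hsummable hjconv (by filter_upwards with h; exact fun j => hintbound h j)
  -- rewrite the limit
  have hlimit : (∑' j : ℕ, ∫ s, α * (B3 a1 a2 a3 a4 l1 l2 j s
      * spow (C3 a1 a2 a3 a4 l1 l2 j s) (α - 1)) ∂Γ) = α * D5 Γ α a1 a2 a3 a4 l1 l2 := by
    rw [D5, ← tsum_mul_left]
    congr 1
    funext j
    rw [MeasureTheory.integral_const_mul]
  rw [← hlimit]
  -- rewrite the function
  refine hfinal.congr fun h => ?_
  rw [CDpos, ← tsum_div_const]
  congr 1
  funext j
  exact MeasureTheory.integral_div _ _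
end

section
/- Under the stated setup with equal eigenvalues λ₁ = λ₂ = λ, 0 < |λ| < 1, one has lim_{h→∞} CD⁺(h)/(h·λʰ) = α·D₆; equivalently, the cross-codifference CD(X₁(t),X₂(t+h)) is asymptotically α·D₆·h·λʰ as h → ∞. -/
open MeasureTheory Filter Topology

noncomputable def A4 (a1 a2 a3 a4 l : ℝ) (j : ℕ) (s : Sphere2) : ℝ :=
  (j : ℝ) * l ^ ((j : ℤ) - 1) * a3 * s.1.1 + (j : ℝ) * l ^ ((j : ℤ) - 1) * a4 * s.1.2
    - (j : ℝ) * l ^ j * s.1.2 + l ^ j * s.1.2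

noncomputable def B4 (a1 a2 a3 a4 l : ℝ) (j : ℕ) (s : Sphere2) : ℝ :=
  l ^ ((j : ℤ) - 1) * a3 * s.1.1 + l ^ ((j : ℤ) - 1) * a4 * s.1.2 - l ^ j * s.1.2

noncomputable def C4 (a1 a2 a3 a4 l : ℝ) (j : ℕ) (s : Sphere2) : ℝ :=
  (j : ℝ) * l ^ ((j : ℤ) - 1) * a1 * s.1.1 - (j : ℝ) * l ^ j * s.1.1 + l ^ j * s.1.1
    + (j : ℝ) * l ^ ((j : ℤ) - 1) * a2 * s.1.2

/-- The cross-codifference `CD(X₁(t), X₂(t+h))` in the double-eigenvalue case. -/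
noncomputable def CDpos' (Γ : Measure Sphere2) (α a1 a2 a3 a4 l : ℝ) (h : ℕ) : ℝ :=
  ∑' j : ℕ, ∫ s,
    (|l ^ h * A4 a1 a2 a3 a4 l j s + (h : ℝ) * l ^ h * B4 a1 a2 a3 a4 l j s| ^ α
      + |C4 a1 a2 a3 a4 l j s| ^ α
      - |C4 a1 a2 a3 a4 l j s - (l ^ h * A4 a1 a2 a3 a4 l j s + (h : ℝ) * l ^ h * B4 a1 a2 a3 a4 l j s)| ^ α) ∂Γ

/-- The cross-covariation `CV(X₁(t), X₂(t+h))` in the double-eigenvalue case. -/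
noncomputable def CVpos' (Γ : Measure Sphere2) (α a1 a2 a3 a4 l : ℝ) (h : ℕ) : ℝ :=
  ∑' j : ℕ, ∫ s,
    C4 a1 a2 a3 a4 l j s * spow (l ^ h * A4 a1 a2 a3 a4 l j s + (h : ℝ) * l ^ h * B4 a1 a2 a3 a4 l j s) (α - 1) ∂Γ

noncomputable def D6 (Γ : Measure Sphere2) (α a1 a2 a3 a4 l : ℝ) : ℝ :=
  ∑' j : ℕ, ∫ s, B4 a1 a2 a3 a4 l j s * spow (C4 a1 a2 a3 a4 l j s) (α - 1) ∂Γ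

noncomputable def D9 (Γ : Measure Sphere2) (α a1 a2 a3 a4 l : ℝ) : ℝ :=
  ∑' j : ℕ, ∫ s, C4 a1 a2 a3 a4 l j s * spow (B4 a1 a2 a3 a4 l j s) (α - 1) ∂Γ

section Helpers

lemma continuous_abs_rpow {p : ℝ} (hp : 0 < p) : Continuous fun x : ℝ => |x| ^ p :=
  continuous_abs.rpow_const fun _ => Or.inr hp.le

lemma hasDerivAt_spow {p : ℝ} (hp : 1 < p) (x : ℝ) :
    HasDerivAt (fun y : ℝ => |y| ^ p) (p * spow x (p - 1)) x := by
  rw [← spow_deriv_eq]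
  exact hasDerivAt_abs_rpow x hp

lemma abs_rpow_sub_abs_rpow_le_s6 {p : ℝ} (hp : 1 < p) {x y R : ℝ}
    (hx : |x| ≤ R) (hy : |y| ≤ R) : |(|x| ^ p) - |y| ^ p| ≤ p * R ^ (p - 1) * |x - y| := by
  have hR0 : 0 ≤ R := (abs_nonneg x).trans hx
  have key := (convex_Icc (-R) R).norm_image_sub_le_of_norm_hasDerivWithin_le
    (f := fun t : ℝ => |t| ^ p) (f' := fun t : ℝ => p * spow t (p - 1))
    (fun t _ => (hasDerivAt_spow hp t).hasDerivWithinAt)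
    (C := p * R ^ (p - 1)) ?_ (abs_le.1 hy) (abs_le.1 hx)
  · simpa [Real.norm_eq_abs, abs_sub_comm] using key
  · intro t ht
    rw [Real.norm_eq_abs, abs_mul, abs_of_pos (by linarith : (0:ℝ) < p)]
    have h1 : |spow t (p - 1)| ≤ |t| ^ (p - 1) := abs_spow_le t (p - 1)
    have h2 : |t| ^ (p - 1) ≤ R ^ (p - 1) :=
      Real.rpow_le_rpow (abs_nonneg t) (abs_le.2 ht) (by linarith)
    have := h1.trans h2
    nlinarith [Real.rpow_nonneg hR0 (p-1)]

lemma nat_mul_pow_le {q : ℝ} (hq0 : 0 ≤ q) (hq1 : q < 1) (j : ℕ) :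
    ((j : ℝ) + 1) * q ^ j ≤ 1 / (1 - q) := by
  have h1 : ((j : ℝ) + 1) * q ^ j ≤ ∑ k ∈ Finset.range (j + 1), q ^ k := by
    have : ∀ k ∈ Finset.range (j + 1), q ^ j ≤ q ^ k := fun k hk =>
      pow_le_pow_of_le_one hq0 hq1.le (Nat.lt_succ_iff.1 (Finset.mem_range.1 hk))
    calc ((j : ℝ) + 1) * q ^ j = ∑ _k ∈ Finset.range (j + 1), q ^ j := by
          rw [Finset.sum_const, Finset.card_range]; push_cast; ring
      _ ≤ _ := Finset.sum_le_sum this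
  refine h1.trans ?_
  rw [geom_sum_eq (by linarith : q ≠ 1)]
  have hrw : (q ^ (j + 1) - 1) / (q - 1) = (1 - q ^ (j + 1)) / (1 - q) := by
    rw [← neg_div_neg_eq]; ring_nf
  rw [hrw]
  have : 0 ≤ q ^ (j + 1) := pow_nonneg hq0 _
  exact (div_le_div_iff_of_pos_right (by linarith)).2 (by linarith)

end Helpers

set_option maxHeartbeats 1000000 in
theorem CD_pos_asymptotic_case_III
    (Γ : Measure Sphere2) [IsFiniteMeasure Γ]
    (α a1 a2 a3 a4 l : ℝ) (hα1 : 1 < α) (hα2 : α < 2)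
    (hl : l ^ 2 - (a1 + a4) * l + (a1 * a4 - a2 * a3) = 0)
    (hdisc : (a1 - a4) ^ 2 = -(4 * a2 * a3)) (habs : |l| < 1)
    (hl0 : 0 < |l|) :
    Tendsto (fun h : ℕ => CDpos' Γ α a1 a2 a3 a4 l h / ((h : ℝ) * l ^ h)) atTop
      (𝓝 (α * D6 Γ α a1 a2 a3 a4 l)) := by
  have hl' : l ≠ 0 := abs_pos.mp hl0
  set ρ : ℝ := |l| with hρdef
  have hρ0 : 0 < ρ := hl0
  have hρ1 : ρ < 1 := habs
  have hα0 : (0:ℝ) < α := by linarith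
  have hα1' : (0:ℝ) < α - 1 := by linarith
  -- abbreviations
  set A := A4 a1 a2 a3 a4 l with hA
  set B := B4 a1 a2 a3 a4 l with hB
  set C := C4 a1 a2 a3 a4 l with hC
  set d : ℕ → ℝ := fun h => (h : ℝ) * l ^ h with hd
  set ε : ℕ → ℕ → Sphere2 → ℝ := fun h j s => l ^ h * A j s + (h : ℝ) * l ^ h * B j s with hε
  set F : ℕ → ℕ → Sphere2 → ℝ := fun h j s =>
    (|ε h j s| ^ α + |C j s| ^ α - |C j s - ε h j s| ^ α) / d h with hF
  -- constants
  set K₀ : ℝ := |a1| + |a2| + |a3| + |a4| + 1 with hK₀def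
  have hK₀1 : 1 ≤ K₀ := by
    have := abs_nonneg a1; have := abs_nonneg a2; have := abs_nonneg a3; have := abs_nonneg a4
    simp only [hK₀def]; linarith
  have hK₀0 : 0 < K₀ := by linarith
  set c : ℕ → ℝ := fun j => 3 * K₀ / ρ * ((j : ℝ) + 1) * ρ ^ j with hcdef
  have hc0 : ∀ j, 0 < c j := by
    intro j
    have : (0:ℝ) < ρ ^ j := pow_pos hρ0 j
    have hj : (0:ℝ) < (j:ℝ) + 1 := by positivity
    simp only [hcdef]
    exact mul_pos (mul_pos (div_pos (by linarith) hρ0) hj) this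
  set Hc : ℝ := 1 / (1 - ρ) with hHcdef
  have hHc0 : 0 < Hc := by simp only [hHcdef]; exact div_pos one_pos (by linarith)
  have hd_abs : ∀ h : ℕ, |d h| = (h : ℝ) * ρ ^ h := by
    intro h
    simp only [hd, abs_mul, abs_pow, Nat.abs_cast, hρdef]
  have hd_ne : ∀ h : ℕ, 1 ≤ h → d h ≠ 0 := by
    intro h hh
    simp only [hd]
    exact mul_ne_zero (Nat.cast_ne_zero.2 (by omega)) (pow_ne_zero _ hl')
  have hdH : ∀ h : ℕ, (h : ℝ) * ρ ^ h ≤ Hc := by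
    intro h
    have h1 : (h : ℝ) * ρ ^ h ≤ ((h : ℝ) + 1) * ρ ^ h := by
      nlinarith [pow_nonneg hρ0.le h]
    exact h1.trans (nat_mul_pow_le hρ0.le hρ1 h)
  -- bounds on sphere coords
  have hsb : ∀ s : Sphere2, |s.1.1| ≤ 1 ∧ |s.1.2| ≤ 1 := by
    intro s
    have hs := s.2
    constructor
    · exact abs_le_one_iff_mul_self_le_one.2 (by nlinarith [sq_nonneg s.1.2])
    · exact abs_le_one_iff_mul_self_le_one.2 (by nlinarith [sq_nonneg s.1.1])
  have hz : ∀ j : ℕ, l ^ ((j:ℤ) - 1) = l ^ j / l := by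
    intro j
    rw [zpow_sub₀ hl', zpow_one, zpow_natCast]
  have hpowdiv : ∀ j : ℕ, |l ^ j / l| = ρ ^ j / ρ := by
    intro j; rw [abs_div, abs_pow]
  -- structural bounds
  have hKa : |a1| ≤ K₀ ∧ |a2| ≤ K₀ ∧ |a3| ≤ K₀ ∧ |a4| ≤ K₀ ∧ |l| ≤ K₀ := by
    have h1 := abs_nonneg a1; have h2 := abs_nonneg a2
    have h3 := abs_nonneg a3; have h4 := abs_nonneg a4
    refine ⟨?_, ?_, ?_, ?_, ?_⟩ <;> simp only [hK₀def] <;> linarith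
  obtain ⟨hKa1, hKa2, hKa3, hKa4, hKl⟩ := hKa
  have hterm : ∀ (w z n : ℝ), |w| ≤ K₀ → |z| ≤ 1 → 0 ≤ n → |n * w * z| ≤ n * K₀ := by
    intro w z n hw hz' hn
    rw [abs_mul, abs_mul, abs_of_nonneg hn]
    nlinarith [mul_nonneg hn (sub_nonneg.2 hw), abs_nonneg w, abs_nonneg z,
      mul_nonneg (mul_nonneg hn (abs_nonneg w)) (sub_nonneg.2 hz')]
  have hsub : ∀ a b : ℝ, |a - b| ≤ |a| + |b| := fun a b => abs_sub a b
  have htri : ∀ w1 w2 w3 w4 : ℝ, |w1 + w2 - w3 + w4| ≤ |w1| + |w2| + |w3| + |w4| := by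
    intro w1 w2 w3 w4
    calc |w1 + w2 - w3 + w4| ≤ |w1 + w2 - w3| + |w4| := abs_add_le _ _
      _ ≤ |w1 + w2| + |w3| + |w4| := by linarith [hsub (w1 + w2) w3]
      _ ≤ _ := by linarith [abs_add_le w1 w2]
  have hfinish : ∀ j : ℕ, ∀ y : ℝ, |y| ≤ 3 * K₀ * ((j:ℝ) + 1) → |l ^ j / l * y| ≤ c j := by
    intro j y hy
    have hpnn : (0:ℝ) ≤ ρ ^ j / ρ := by positivity
    rw [abs_mul, hpowdiv j]
    calc ρ ^ j / ρ * |y| ≤ ρ ^ j / ρ * (3 * K₀ * ((j:ℝ) + 1)) := by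
          exact mul_le_mul_of_nonneg_left hy hpnn
      _ = c j := by simp only [hcdef]; ring
  have habc : ∀ j (s : Sphere2), |A j s| ≤ c j ∧ |B j s| ≤ c j ∧ |C j s| ≤ c j := by
    intro j s
    obtain ⟨hu, hv⟩ := hsb s
    have hj0 : (0:ℝ) ≤ (j:ℝ) := Nat.cast_nonneg j
    have h10 : (0:ℝ) ≤ 1 := zero_le_one
    refine ⟨?_, ?_, ?_⟩
    · have hAeq : A j s = l ^ j / l *
          ((j:ℝ) * a3 * s.1.1 + (j:ℝ) * a4 * s.1.2 - (j:ℝ) * l * s.1.2 + l * s.1.2) := by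
        rw [hA]; simp only [A4, hz]; field_simp
      rw [hAeq]
      refine hfinish j _ ((htri _ _ _ _).trans ?_)
      have e1 := hterm a3 s.1.1 (j:ℝ) hKa3 hu hj0
      have e2 := hterm a4 s.1.2 (j:ℝ) hKa4 hv hj0
      have e3 := hterm l s.1.2 (j:ℝ) hKl hv hj0
      have e4 := hterm l s.1.2 1 hKl hv h10
      rw [one_mul] at e4
      linarith [mul_nonneg hj0 hK₀0.le]
    · have hBeq : B j s = l ^ j / l * (a3 * s.1.1 + a4 * s.1.2 - l * s.1.2) := by
        rw [hB]; simp only [B4, hz]; field_simp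
      rw [hBeq]
      have t2 : |a3 * s.1.1 + a4 * s.1.2 - l * s.1.2|
          ≤ |a3 * s.1.1| + |a4 * s.1.2| + |l * s.1.2| := by
        have := htri (a3 * s.1.1) (a4 * s.1.2) (l * s.1.2) 0
        simpa using this
      refine hfinish j _ (t2.trans ?_)
      have e1 := hterm a3 s.1.1 1 hKa3 hu h10
      have e2 := hterm a4 s.1.2 1 hKa4 hv h10
      have e3 := hterm l s.1.2 1 hKl hv h10
      rw [one_mul] at e1 e2 e3
      linarith [mul_nonneg hj0 hK₀0.le]
    · have hCeq : C j s = l ^ j / l *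
          ((j:ℝ) * a1 * s.1.1 - (j:ℝ) * l * s.1.1 + l * s.1.1 + (j:ℝ) * a2 * s.1.2) := by
        rw [hC]; simp only [C4, hz]; field_simp
      rw [hCeq]
      have t2 : |(j:ℝ) * a1 * s.1.1 - (j:ℝ) * l * s.1.1 + l * s.1.1 + (j:ℝ) * a2 * s.1.2|
          ≤ |(j:ℝ) * a1 * s.1.1| + |(j:ℝ) * l * s.1.1| + |l * s.1.1| + |(j:ℝ) * a2 * s.1.2| := by
        calc |(j:ℝ) * a1 * s.1.1 - (j:ℝ) * l * s.1.1 + l * s.1.1 + (j:ℝ) * a2 * s.1.2|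
            ≤ |(j:ℝ) * a1 * s.1.1 - (j:ℝ) * l * s.1.1 + l * s.1.1| + |(j:ℝ) * a2 * s.1.2| :=
              abs_add_le _ _
          _ ≤ |(j:ℝ) * a1 * s.1.1 - (j:ℝ) * l * s.1.1| + |l * s.1.1| + |(j:ℝ) * a2 * s.1.2| := by
              linarith [abs_add_le ((j:ℝ) * a1 * s.1.1 - (j:ℝ) * l * s.1.1) (l * s.1.1)]
          _ ≤ _ := by linarith [hsub ((j:ℝ) * a1 * s.1.1) ((j:ℝ) * l * s.1.1)]
      refine hfinish j _ (t2.trans ?_)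
      have e1 := hterm a1 s.1.1 (j:ℝ) hKa1 hu hj0
      have e2 := hterm l s.1.1 (j:ℝ) hKl hu hj0
      have e3 := hterm l s.1.1 1 hKl hu h10
      have e4 := hterm a2 s.1.2 (j:ℝ) hKa2 hv hj0
      rw [one_mul] at e3
      linarith [mul_nonneg hj0 hK₀0.le]
  -- bound constants
  set E : ℕ → ℝ := fun j => 2 * Hc * c j with hEdef
  set R : ℕ → ℝ := fun j => c j + E j with hRdef
  set b : ℕ → ℝ := fun j => ((E j) ^ (α - 1) + α * (R j) ^ (α - 1)) * (2 * c j) with hbdef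
  have hE0 : ∀ j, 0 ≤ E j := fun j => by
    simp only [hEdef]
    exact mul_nonneg (by linarith [hHc0]) (hc0 j).le
  have hcoeff0 : ∀ j, 0 ≤ (E j) ^ (α - 1) + α * (R j) ^ (α - 1) := fun j =>
    add_nonneg (Real.rpow_nonneg (hE0 j) _)
      (mul_nonneg hα0.le (Real.rpow_nonneg (by simp only [hRdef]; linarith [(hc0 j).le, hE0 j]) _))
  have hb0 : ∀ j, 0 ≤ b j := fun j =>
    mul_nonneg (hcoeff0 j) (by linarith [(hc0 j).le])
  -- epsilon bound
  have hεbd : ∀ h : ℕ, 1 ≤ h → ∀ j (s : Sphere2), |ε h j s| ≤ |d h| * (2 * c j) := by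
    intro h hh j s
    obtain ⟨hA1, hB1, _⟩ := habc j s
    have hh1 : (1:ℝ) ≤ (h:ℝ) := by exact_mod_cast hh
    have hρh : (0:ℝ) ≤ ρ ^ h := pow_nonneg hρ0.le h
    have h1 : |ε h j s| ≤ ρ ^ h * |A j s| + (h:ℝ) * ρ ^ h * |B j s| := by
      simp only [hε]
      refine (abs_add_le _ _).trans (le_of_eq ?_)
      rw [abs_mul, abs_mul, abs_mul, abs_pow, Nat.abs_cast, ← hρdef]
    have t1a : ρ ^ h * |A j s| ≤ ρ ^ h * c j := mul_le_mul_of_nonneg_left hA1 hρh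
    have t1b : 0 ≤ ((h:ℝ) - 1) * (ρ ^ h * c j) :=
      mul_nonneg (by linarith) (mul_nonneg hρh (hc0 j).le)
    have t2 : (h:ℝ) * ρ ^ h * |B j s| ≤ (h:ℝ) * ρ ^ h * c j :=
      mul_le_mul_of_nonneg_left hB1 (mul_nonneg (by linarith) hρh)
    rw [hd_abs]
    nlinarith
  -- key uniform bound
  have hkey : ∀ h : ℕ, 1 ≤ h → ∀ j (s : Sphere2), |F h j s| ≤ b j := by
    intro h hh j s
    obtain ⟨_, _, hC1⟩ := habc j s
    have hdpos : 0 < |d h| := abs_pos.2 (hd_ne h hh)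
    have hεd := hεbd h hh j s
    have hεE : |ε h j s| ≤ E j := by
      calc |ε h j s| ≤ |d h| * (2 * c j) := hεd
        _ ≤ Hc * (2 * c j) := by
            rw [hd_abs]
            exact mul_le_mul_of_nonneg_right (hdH h) (by linarith [(hc0 j).le])
        _ = E j := by simp only [hEdef]; ring
    have hnum1 : |ε h j s| ^ α ≤ (E j) ^ (α - 1) * |ε h j s| := by
      rcases eq_or_ne (ε h j s) 0 with h0 | h0
      · rw [h0, abs_zero, Real.zero_rpow (by linarith : α ≠ 0), mul_zero]
      · have hpos : 0 < |ε h j s| := abs_pos.2 h0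
        have heq : |ε h j s| ^ α = |ε h j s| ^ (α - 1) * |ε h j s| := by
          rw [← Real.rpow_add_one hpos.ne' (α - 1)]; ring_nf
        rw [heq]
        exact mul_le_mul_of_nonneg_right
          (Real.rpow_le_rpow (abs_nonneg _) hεE (by linarith)) (abs_nonneg _)
    have hnum2 : |(|C j s| ^ α) - |C j s - ε h j s| ^ α| ≤ α * (R j) ^ (α - 1) * |ε h j s| := by
      have hx : |C j s| ≤ R j := by simp only [hRdef]; linarith [hE0 j]
      have hy : |C j s - ε h j s| ≤ R j := by
        refine (abs_sub _ _).trans ?_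
        simp only [hRdef]; linarith [hεE]
      have hr := abs_rpow_sub_abs_rpow_le_s6 hα1 hx hy
      have : C j s - (C j s - ε h j s) = ε h j s := by ring
      rw [this] at hr
      exact hr
    have habsF : |F h j s| ≤ ((E j) ^ (α - 1) + α * (R j) ^ (α - 1)) * |ε h j s| / |d h| := by
      simp only [hF, abs_div]
      gcongr ?_ / _
      calc |(|ε h j s| ^ α + |C j s| ^ α - |C j s - ε h j s| ^ α)|
          ≤ |(|ε h j s| ^ α)| + |(|C j s| ^ α) - |C j s - ε h j s| ^ α| := by
            rw [show |ε h j s| ^ α + |C j s| ^ α - |C j s - ε h j s| ^ α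
              = |ε h j s| ^ α + ((|C j s| ^ α) - |C j s - ε h j s| ^ α) by ring]
            exact abs_add_le _ _
        _ ≤ (E j) ^ (α - 1) * |ε h j s| + α * (R j) ^ (α - 1) * |ε h j s| := by
            rw [abs_of_nonneg (Real.rpow_nonneg (abs_nonneg _) α)]
            exact add_le_add hnum1 hnum2
        _ = ((E j) ^ (α - 1) + α * (R j) ^ (α - 1)) * |ε h j s| := by ring
    calc |F h j s| ≤ ((E j) ^ (α - 1) + α * (R j) ^ (α - 1)) * |ε h j s| / |d h| := habsF
      _ ≤ ((E j) ^ (α - 1) + α * (R j) ^ (α - 1)) * (|d h| * (2 * c j)) / |d h| := by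
          gcongr
      _ = b j := by
          rw [hbdef]
          field_simp
  -- summability of the bounds
  set ΓT : ℝ := (Γ Set.univ).toReal with hΓTdef
  have hΓT0 : 0 ≤ ΓT := ENNReal.toReal_nonneg
  set BND : ℕ → ℝ := fun j => b j * ΓT with hBNDdef
  have hsum : Summable BND := by
    have hρ'0 : (0:ℝ) < (1 + ρ)/2 := by linarith
    have hρ'1 : (1 + ρ)/2 < 1 := by linarith
    set ρ' : ℝ := (1 + ρ)/2 with hρ'def
    set q : ℝ := ρ / ρ' with hqdef
    have hq0 : 0 ≤ q := div_nonneg hρ0.le hρ'0.le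
    have hq1 : q < 1 := (div_lt_one hρ'0).2 (by simp only [hρ'def]; linarith)
    set D : ℝ := 3 * K₀ / ρ * (1 / (1 - q)) with hDdef
    have hD0 : 0 ≤ D := by
      simp only [hDdef]
      have : 0 < 1 - q := by linarith
      positivity
    have hcle : ∀ j, c j ≤ D * ρ' ^ j := by
      intro j
      have hceq : c j = 3 * K₀ / ρ * (((j:ℝ) + 1) * q ^ j) * ρ' ^ j := by
        simp only [hcdef, hqdef]
        rw [div_pow]
        field_simp
      rw [hceq]
      have h2 := nat_mul_pow_le hq0 hq1 j
      have h3 : (0:ℝ) < 3 * K₀ / ρ := by positivity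
      simp only [hDdef]
      exact mul_le_mul_of_nonneg_right
        (mul_le_mul_of_nonneg_left h2 h3.le) (pow_nonneg hρ'0.le j)
    have h2Hc : (0:ℝ) ≤ 2 * Hc := by linarith
    have h12Hc : (0:ℝ) ≤ 1 + 2 * Hc := by linarith
    set K : ℝ := ((2 * Hc) ^ (α - 1) + α * (1 + 2 * Hc) ^ (α - 1)) * 2 with hKdef
    have hK0 : 0 ≤ K := by
      simp only [hKdef]
      have := Real.rpow_nonneg h2Hc (α - 1)
      have := Real.rpow_nonneg h12Hc (α - 1)
      nlinarith
    have hbeq : ∀ j, b j = K * (c j) ^ α := by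
      intro j
      have hE : E j = (2 * Hc) * c j := by simp only [hEdef]
      have hR : R j = (1 + 2 * Hc) * c j := by simp only [hRdef, hEdef]; ring
      have hcα : (c j) ^ (α - 1) * (c j) = (c j) ^ α := by
        rw [← Real.rpow_add_one (hc0 j).ne' (α - 1)]; norm_num
      simp only [hbdef, hKdef]
      rw [hE, hR, Real.mul_rpow h2Hc (hc0 j).le, Real.mul_rpow h12Hc (hc0 j).le, ← hcα]
      ring
    have hcαle : ∀ j, (c j) ^ α ≤ D ^ α * ((ρ' ^ α) ^ j) := by
      intro j
      have h1 : (c j) ^ α ≤ (D * ρ' ^ j) ^ α :=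
        Real.rpow_le_rpow (hc0 j).le (hcle j) hα0.le
      refine h1.trans (le_of_eq ?_)
      rw [Real.mul_rpow hD0 (pow_nonneg hρ'0.le j)]
      congr 1
      rw [← Real.rpow_natCast ρ' j, ← Real.rpow_mul hρ'0.le, mul_comm,
        Real.rpow_mul hρ'0.le, Real.rpow_natCast]
    have hgeo : Summable (fun j : ℕ => (K * D ^ α) * (ρ' ^ α) ^ j) :=
      (summable_geometric_of_lt_one (Real.rpow_nonneg hρ'0.le α)
        (Real.rpow_lt_one hρ'0.le hρ'1 hα0)).mul_left _
    have hbsum : Summable b := by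
      refine Summable.of_nonneg_of_le hb0 (fun j => ?_) hgeo
      rw [hbeq j]
      calc K * (c j) ^ α ≤ K * (D ^ α * (ρ' ^ α) ^ j) :=
            mul_le_mul_of_nonneg_left (hcαle j) hK0
        _ = K * D ^ α * (ρ' ^ α) ^ j := by ring
    simp only [hBNDdef]
    exact hbsum.mul_right ΓT
  -- continuity in s
  have hu_cont : Continuous (fun s : Sphere2 => s.1.1) :=
    continuous_fst.comp continuous_subtype_val
  have hv_cont : Continuous (fun s : Sphere2 => s.1.2) :=
    continuous_snd.comp continuous_subtype_val
  have hAc : ∀ j, Continuous (A j) := by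
    intro j
    rw [hA]
    show Continuous fun s : Sphere2 => A4 a1 a2 a3 a4 l j s
    unfold A4
    fun_prop
  have hBc : ∀ j, Continuous (B j) := by
    intro j
    rw [hB]
    show Continuous fun s : Sphere2 => B4 a1 a2 a3 a4 l j s
    unfold B4
    fun_prop
  have hCc : ∀ j, Continuous (C j) := by
    intro j
    rw [hC]
    show Continuous fun s : Sphere2 => C4 a1 a2 a3 a4 l j s
    unfold C4
    fun_prop
  have hεc : ∀ h j, Continuous (fun s => ε h j s) := by
    intro h j
    simp only [hε]
    exact (continuous_const.mul (hAc j)).add (continuous_const.mul (hBc j))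
  have hFc : ∀ h j, Continuous (F h j) := by
    intro h j
    simp only [hF]
    apply Continuous.div_const
    refine Continuous.sub (Continuous.add ?_ ?_) ?_
    · exact ((hεc h j).abs).rpow_const fun s => Or.inr hα0.le
    · exact ((hCc j).abs).rpow_const fun s => Or.inr hα0.le
    · exact (((hCc j).sub (hεc h j)).abs).rpow_const fun s => Or.inr hα0.le
  -- the limit h → ∞ of d
  have hd_lim : Tendsto d atTop (𝓝 0) := by
    simp only [hd]
    exact tendsto_self_mul_const_pow_of_abs_lt_one habs
  -- pointwise limits
  have hptwise : ∀ j (s : Sphere2),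
      Tendsto (fun h => F h j s) atTop (𝓝 (α * B j s * spow (C j s) (α - 1))) := by
    intro j s
    set a := A j s with hadef
    set b' := B j s with hb'def
    set x := C j s with hxdef
    have hr_lim : Tendsto (fun h : ℕ => a / (h:ℝ) + b') atTop (𝓝 b') := by
      have := (tendsto_const_div_atTop_nhds_zero_nat a).add
        (tendsto_const_nhds (x := b') (f := atTop (α := ℕ)))
      simpa using this
    have he_eq : ∀ᶠ h : ℕ in atTop, ε h j s = d h * (a / (h:ℝ) + b') := by
      filter_upwards [eventually_ge_atTop 1] with h hh
      have hne : ((h:ℝ)) ≠ 0 := Nat.cast_ne_zero.2 (by omega)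
      simp only [hε, hd]
      field_simp
      ring
    have he_lim : Tendsto (fun h => ε h j s) atTop (𝓝 0) := by
      have := hd_lim.mul hr_lim
      rw [zero_mul] at this
      exact this.congr' (he_eq.mono fun h e => e.symm)
    have habs_rpow_lim : Tendsto (fun h => |ε h j s| ^ (α - 1)) atTop (𝓝 0) := by
      have := ((continuous_abs_rpow hα1').tendsto 0).comp he_lim
      simpa [Function.comp_def, Real.zero_rpow hα1'.ne'] using this
    have hT1 : Tendsto (fun h => |ε h j s| ^ α / d h) atTop (𝓝 0) := by
      apply squeeze_zero_norm' (a := fun h : ℕ => |ε h j s| ^ (α - 1) * |a / (h:ℝ) + b'|)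
      · filter_upwards [eventually_ge_atTop 1, he_eq] with h hh he
        have hdne := hd_ne h hh
        rcases eq_or_ne (ε h j s) 0 with h0 | h0
        · rw [h0, abs_zero, Real.zero_rpow (by linarith : α ≠ 0), zero_div, norm_zero,
            Real.zero_rpow hα1'.ne', zero_mul]
        · have hpos : 0 < |ε h j s| := abs_pos.2 h0
          have hr : |ε h j s| / |d h| = |a / (h:ℝ) + b'| := by
            rw [← abs_div, he, mul_comm, mul_div_assoc, div_self hdne, mul_one]
          rw [Real.norm_eq_abs, abs_div,
            abs_of_nonneg (Real.rpow_nonneg (abs_nonneg _) α),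
            show |ε h j s| ^ α = |ε h j s| ^ (α - 1) * |ε h j s| from by
              rw [← Real.rpow_add_one hpos.ne' (α - 1)]; norm_num,
            mul_div_assoc, hr]
      · have := habs_rpow_lim.mul hr_lim.abs
        simpa using this
    have hG : HasDerivAt (fun t : ℝ => |x - t| ^ α) (-(α * spow x (α - 1))) 0 := by
      have inner : HasDerivAt (fun t : ℝ => x - t) (-1) 0 := (hasDerivAt_id 0).const_sub x
      have comp := (hasDerivAt_spow hα1 (x - 0)).comp 0 inner
      simp only [sub_zero] at comp
      have : (fun t : ℝ => |x - t| ^ α) = (fun y : ℝ => |y| ^ α) ∘ (fun t : ℝ => x - t) := rfl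
      rw [this]
      exact comp.congr_deriv (by ring)
    set φ : ℝ → ℝ := fun t =>
      if t = 0 then α * spow x (α - 1) else (|x| ^ α - |x - t| ^ α) / t with hφdef
    have hφcont : Tendsto φ (𝓝 0) (𝓝 (α * spow x (α - 1))) := by
      rw [← nhdsNE_sup_pure 0, tendsto_sup]
      constructor
      · have hslope := hasDerivAt_iff_tendsto_slope.1 hG
        have hsl : Tendsto (fun t => -slope (fun t : ℝ => |x - t| ^ α) 0 t) (𝓝[≠] 0)
            (𝓝 (α * spow x (α - 1))) := by
          simpa using hslope.neg
        refine hsl.congr' ?_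
        filter_upwards [self_mem_nhdsWithin] with t (ht : t ≠ 0)
        rw [hφdef]
        simp only [if_neg ht]
        rw [slope_def_field, sub_zero, sub_zero]
        ring
      · have := tendsto_pure_nhds φ 0
        simpa [hφdef] using this
    have hT2eq : ∀ᶠ h : ℕ in atTop,
        (|x| ^ α - |x - ε h j s| ^ α) / d h = φ (ε h j s) * (a / (h:ℝ) + b') := by
      filter_upwards [eventually_ge_atTop 1, he_eq] with h hh he
      have hdne := hd_ne h hh
      rcases eq_or_ne (ε h j s) 0 with h0 | h0
      · rw [h0]
        have hr0 : a / (h:ℝ) + b' = 0 := by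
          have h00 : d h * (a / (h:ℝ) + b') = 0 := by rw [← he, h0]
          rcases mul_eq_zero.1 h00 with h' | h'
          · exact absurd h' hdne
          · exact h'
        rw [hr0, mul_zero, sub_zero, sub_self, zero_div]
      · have hreq : a / (h:ℝ) + b' = ε h j s / d h := by
          rw [he, mul_comm, mul_div_assoc, div_self hdne, mul_one]
        rw [hφdef]
        simp only [if_neg h0]
        rw [hreq]
        field_simp
    have hT2 : Tendsto (fun h : ℕ => (|x| ^ α - |x - ε h j s| ^ α) / d h) atTop
        (𝓝 (α * spow x (α - 1) * b')) := by
      have := (hφcont.comp he_lim).mul hr_lim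
      exact this.congr' (hT2eq.mono fun h e => e.symm)
    have hsplit : ∀ h : ℕ,
        F h j s = |ε h j s| ^ α / d h + (|x| ^ α - |x - ε h j s| ^ α) / d h := by
      intro h
      simp only [hF]
      rw [hxdef]
      ring
    have hfin := hT1.add hT2
    rw [zero_add] at hfin
    have hfin2 := hfin.congr (fun h => (hsplit h).symm)
    have : α * b' * spow x (α - 1) = α * spow x (α - 1) * b' := by ring
    rw [this]
    exact hfin2
  -- dominated convergence for each integral
  have hIj : ∀ j, Tendsto (fun h => ∫ s, F h j s ∂Γ) atTop
      (𝓝 (∫ s, α * B j s * spow (C j s) (α - 1) ∂Γ)) := by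
    intro j
    refine tendsto_integral_filter_of_dominated_convergence (bound := fun _ => b j)
      ?_ ?_ (integrable_const _) ?_
    · haveI : OpensMeasurableSpace Sphere2 :=
        Subtype.opensMeasurableSpace {s : ℝ × ℝ | s.1 ^ 2 + s.2 ^ 2 = 1}
      exact Eventually.of_forall fun h => (hFc h j).aestronglyMeasurable
    · filter_upwards [eventually_ge_atTop 1] with h hh
      exact Eventually.of_forall fun s => by
        rw [Real.norm_eq_abs]; exact hkey h hh j s
    · exact Eventually.of_forall fun s => hptwise j s
  -- rewrite the goal
  have hEq1 : (fun h : ℕ => CDpos' Γ α a1 a2 a3 a4 l h / ((h:ℝ) * l ^ h))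
      = fun h : ℕ => ∑' j, ∫ s, F h j s ∂Γ := by
    funext h
    rw [CDpos', ← tsum_div_const]
    congr 1
    funext j
    rw [← integral_div]
  have hEq2 : α * D6 Γ α a1 a2 a3 a4 l
      = ∑' j, ∫ s, α * B j s * spow (C j s) (α - 1) ∂Γ := by
    rw [D6, ← tsum_mul_left]
    congr 1
    funext j
    rw [← integral_const_mul]
    simp only [← hB, ← hC, mul_assoc]
  rw [hEq1, hEq2]
  refine tendsto_tsum_of_dominated_convergence hsum hIj ?_
  filter_upwards [eventually_ge_atTop 1] with h hh
  intro j
  have : ‖∫ s, F h j s ∂Γ‖ ≤ b j * (Γ Set.univ).toReal := by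
    refine norm_integral_le_of_norm_le_const ?_
    exact Eventually.of_forall fun s => by
      rw [Real.norm_eq_abs]; exact hkey h hh j s
  simpa [hBNDdef, hΓTdef] using this
end

section
/- Under the stated setup, if λ₂ = −λ₁ with 0 < |λ₁| < 1, then along even lags lim CD⁺(h)/λ₁ʰ = α·(D₄+D₅) (h → ∞, h even), and along odd lags lim CD⁺(h)/λ₁ʰ = α·(D₄−D₅) (h → ∞, h odd). -/
open MeasureTheory Filter Topology

/-! ### Auxiliary lemmas about `spow` -/

instance : BorelSpace Sphere2 := Subtype.borelSpace {s : ℝ × ℝ | s.1 ^ 2 + s.2 ^ 2 = 1}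

lemma spow_zero' (p : ℝ) : spow 0 p = 0 := by simp [spow]

lemma measurable_sign' : Measurable Real.sign := by
  unfold Real.sign
  exact Measurable.ite (measurableSet_lt measurable_id measurable_const) measurable_const
    (Measurable.ite (measurableSet_lt measurable_const measurable_id) measurable_const
      measurable_const)

lemma measurable_spow (p : ℝ) : Measurable (fun x : ℝ => spow x p) :=
  ((measurable_id.abs).pow_const p).mul measurable_sign'

lemma spow_eq {α : ℝ} (x : ℝ) : α * |x| ^ (α - 2) * x = α * spow x (α - 1) := by
  rcases lt_trichotomy x 0 with h | h | h
  · rw [spow, abs_of_neg h, Real.sign_of_neg h]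
    have hx : (0:ℝ) < -x := by linarith
    have : (-x) ^ (α - 1) = (-x) ^ (α - 2) * (-x) := by
      rw [← Real.rpow_add_one (ne_of_gt hx)]; congr 1; ring
    rw [this]; ring
  · simp [h, spow_zero']
  · rw [spow, abs_of_pos h, Real.sign_of_pos h]
    have : x ^ (α - 1) = x ^ (α - 2) * x := by
      rw [← Real.rpow_add_one (ne_of_gt h)]; congr 1; ring
    rw [this]; ring

lemma hasDerivAt_abs_rpow' {α : ℝ} (hα : 1 < α) (x : ℝ) :
    HasDerivAt (fun y : ℝ => |y| ^ α) (α * spow x (α - 1)) x := by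
  have := hasDerivAt_abs_rpow x hα
  rwa [spow_eq] at this

/-- Mean value inequality for `|·| ^ α`. -/
lemma abs_rpow_sub_le {α : ℝ} (hα : 1 < α) {R a b : ℝ} (hR : 0 ≤ R)
    (ha : |a| ≤ R) (hb : |b| ≤ R) :
    abs (|a| ^ α - |b| ^ α) ≤ α * R ^ (α - 1) * |a - b| := by
  have key := Convex.norm_image_sub_le_of_norm_hasDerivWithin_le
    (f := fun y : ℝ => |y| ^ α) (f' := fun y => α * spow y (α - 1))
    (C := α * R ^ (α - 1)) (s := Metric.closedBall (0:ℝ) R)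
    (fun y _ => (hasDerivAt_abs_rpow' hα y).hasDerivWithinAt)
    (fun y hy => by
      rw [Real.norm_eq_abs, abs_mul, abs_of_pos (by linarith : (0:ℝ) < α)]
      have h1 : |spow y (α-1)| ≤ |y| ^ (α - 1) := abs_spow_le y (α-1)
      have h2 : |y| ^ (α - 1) ≤ R ^ (α - 1) := by
        apply Real.rpow_le_rpow (abs_nonneg y) _ (by linarith)
        simpa [Real.norm_eq_abs] using Metric.mem_closedBall.mp hy
      exact mul_le_mul_of_nonneg_left (le_trans h1 h2) (by linarith))
    (convex_closedBall _ _)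
    (by simpa [Real.norm_eq_abs] using hb)
    (by simpa [Real.norm_eq_abs] using ha)
  simpa [Real.norm_eq_abs, abs_sub_comm] using key

/-- Pointwise limit of the difference quotient. -/
lemma ptlim {α : ℝ} (hα : 1 < α) (V C : ℝ) {t : ℕ → ℝ} (ht0 : ∀ k, t k ≠ 0)
    (ht : Tendsto t atTop (𝓝 0)) :
    Tendsto (fun k => (|t k * V| ^ α + |C| ^ α - |C - t k * V| ^ α) / t k) atTop
      (𝓝 (α * (V * spow C (α - 1)))) := by
  have hsplit : ∀ k, (|t k * V| ^ α + |C| ^ α - |C - t k * V| ^ α) / t k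
      = |t k * V| ^ α / t k + (|C| ^ α - |C - t k * V| ^ α) / t k := by
    intro k; ring
  simp only [hsplit]
  have h1 : Tendsto (fun k => |t k * V| ^ α / t k) atTop (𝓝 0) := by
    have hb : ∀ k, ‖|t k * V| ^ α / t k‖ ≤ |t k| ^ (α - 1) * |V| ^ α := by
      intro k
      apply le_of_eq
      rw [Real.norm_eq_abs, abs_div, abs_of_nonneg (Real.rpow_nonneg (abs_nonneg _) α),
        abs_mul, Real.mul_rpow (abs_nonneg _) (abs_nonneg _),
        Real.rpow_sub (abs_pos.mpr (ht0 k)), Real.rpow_one]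
      ring
    refine squeeze_zero_norm hb ?_
    have h2 : Tendsto (fun k => |t k| ^ (α - 1)) atTop (𝓝 0) := by
      have hc : ContinuousAt (fun x : ℝ => x ^ (α - 1)) 0 :=
        Real.continuousAt_rpow_const 0 (α - 1) (Or.inr (by linarith))
      have := hc.tendsto.comp (abs_zero (α := ℝ) ▸ ht.abs)
      simpa [Function.comp_def, Real.zero_rpow (show α - 1 ≠ 0 by linarith)] using this
    simpa using h2.mul_const (|V| ^ α)
  have h2 : Tendsto (fun k => (|C| ^ α - |C - t k * V| ^ α) / t k) atTop
      (𝓝 (α * (V * spow C (α - 1)))) := by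
    have hinner : HasDerivAt (fun u : ℝ => C - u * V) (-V) 0 := by
      simpa using ((hasDerivAt_id (0:ℝ)).mul_const V).const_sub C
    have houter : HasDerivAt (fun y : ℝ => |y| ^ α) (α * spow (C - 0 * V) (α - 1)) (C - 0 * V) :=
      hasDerivAt_abs_rpow' hα _
    have hcomp : HasDerivAt (fun u : ℝ => |C - u * V| ^ α) (α * spow C (α - 1) * (-V)) 0 := by
      have := houter.comp 0 hinner
      simpa [Function.comp_def] using this
    rw [hasDerivAt_iff_tendsto_slope] at hcomp
    have htt : Tendsto t atTop (𝓝[≠] 0) :=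
      tendsto_nhdsWithin_of_tendsto_nhds_of_eventually_within t ht
        (Eventually.of_forall fun k => ht0 k)
    have hneg := (hcomp.comp htt).neg
    simp only [Function.comp] at hneg
    have heq : (fun k => -(slope (fun u : ℝ => |C - u * V| ^ α) 0 (t k)))
        = fun k => (|C| ^ α - |C - t k * V| ^ α) / t k := by
      funext k
      rw [slope_def_field]
      simp only [zero_mul, sub_zero]
      ring
    rw [heq] at hneg
    convert hneg using 2
    ring
  simpa using h1.add h2

/-- rpow/pow juggling: `(lam ^ j) ^ α = (lam ^ α) ^ j`. -/
lemma pow_rpow_comm {lam : ℝ} (hlam : 0 < lam) (α : ℝ) (j : ℕ) :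
    ((lam : ℝ) ^ j) ^ α = (lam ^ α) ^ j := by
  rw [← Real.rpow_natCast lam j, ← Real.rpow_natCast (lam ^ α) j,
    ← Real.rpow_mul hlam.le, ← Real.rpow_mul hlam.le, mul_comm]

lemma pow_rpow_comm' {lam : ℝ} (hlam : 0 < lam) (α : ℝ) (j : ℕ) :
    ((lam : ℝ) ^ j) ^ (α - 1) * lam ^ j = (lam ^ α) ^ j := by
  have e1 : (lam ^ j : ℝ) = lam ^ (j:ℝ) := (Real.rpow_natCast lam j).symm
  calc ((lam : ℝ) ^ j) ^ (α - 1) * lam ^ j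
      = lam ^ ((j:ℝ) * (α - 1)) * lam ^ (j:ℝ) := by rw [e1, ← Real.rpow_mul hlam.le]
    _ = lam ^ ((j:ℝ) * (α - 1) + j) := (Real.rpow_add hlam _ _).symm
    _ = lam ^ ((j:ℝ) * α) := by congr 1; ring
    _ = (lam ^ α) ^ j := by
        rw [mul_comm, Real.rpow_mul hlam.le, Real.rpow_natCast]

/-- The main dominated-convergence step. -/
lemma key_tendsto_s7 (Γ : Measure Sphere2) [IsFiniteMeasure Γ] {α : ℝ} (hα1 : 1 < α)
    (A C : ℕ → Sphere2 → ℝ) (hAc : ∀ j, Continuous (A j)) (hCc : ∀ j, Continuous (C j))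
    {K lam : ℝ} (hK : 0 < K) (hlam0 : 0 < lam) (hlam1 : lam < 1)
    (hA : ∀ j s, |A j s| ≤ K * lam ^ j) (hC : ∀ j s, |C j s| ≤ K * lam ^ j)
    {t : ℕ → ℝ} (ht0 : ∀ k, t k ≠ 0) (ht1 : ∀ k, |t k| ≤ 1) (ht : Tendsto t atTop (𝓝 0)) :
    Tendsto (fun k => ∑' j : ℕ, (∫ s, (|t k * A j s| ^ α + |C j s| ^ α
        - |C j s - t k * A j s| ^ α) ∂Γ) / t k) atTop
      (𝓝 (∑' j : ℕ, ∫ s, α * (A j s * spow (C j s) (α - 1)) ∂Γ)) := by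
  have hα0 : (0:ℝ) < α := by linarith
  set m : ℝ := (Γ Set.univ).toReal with hm
  have hm0 : 0 ≤ m := ENNReal.toReal_nonneg
  set r : ℝ := lam ^ α with hrdef
  have hr0 : 0 < r := Real.rpow_pos_of_pos hlam0 α
  have hr1 : r < 1 := Real.rpow_lt_one hlam0.le hlam1 hα0
  set c0 : ℝ := K ^ α + α * (2 * K) ^ (α - 1) * K with hc0def
  -- pointwise bound
  have hptb : ∀ (k : ℕ) (j : ℕ) (s : Sphere2),
      |(|t k * A j s| ^ α + |C j s| ^ α - |C j s - t k * A j s| ^ α) / t k| ≤ c0 * r ^ j := by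
    intro k j s
    have htk : (0:ℝ) < |t k| := abs_pos.mpr (ht0 k)
    have hKl : (0:ℝ) < K * lam ^ j := mul_pos hK (pow_pos hlam0 j)
    have hAb := hA j s
    have hCb := hC j s
    have hsplit : (|t k * A j s| ^ α + |C j s| ^ α - |C j s - t k * A j s| ^ α) / t k
        = |t k * A j s| ^ α / t k + (|C j s| ^ α - |C j s - t k * A j s| ^ α) / t k := by ring
    rw [hsplit]
    have hterm1 : |(|t k * A j s| ^ α / t k)| ≤ K ^ α * r ^ j := by
      rw [abs_div, abs_of_nonneg (Real.rpow_nonneg (abs_nonneg _) α), abs_mul,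
        Real.mul_rpow (abs_nonneg _) (abs_nonneg _)]
      rw [div_le_iff₀ htk]
      have h1 : |t k| ^ α = |t k| ^ (α - 1) * |t k| := by
        rw [← Real.rpow_add_one (ne_of_gt htk)]; congr 1; ring
      rw [h1]
      have h2 : |t k| ^ (α - 1) ≤ 1 :=
        Real.rpow_le_one (abs_nonneg _) (ht1 k) (by linarith)
      have h3 : |A j s| ^ α ≤ (K * lam ^ j) ^ α :=
        Real.rpow_le_rpow (abs_nonneg _) hAb hα0.le
      have h4 : (K * lam ^ j) ^ α = K ^ α * r ^ j := by
        rw [Real.mul_rpow hK.le (pow_nonneg hlam0.le j), pow_rpow_comm hlam0]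
      calc |t k| ^ (α - 1) * |t k| * |A j s| ^ α
          ≤ 1 * |t k| * ((K * lam ^ j) ^ α) := by
            apply mul_le_mul _ h3 (Real.rpow_nonneg (abs_nonneg _) α)
            · positivity
            · exact mul_le_mul_of_nonneg_right h2 htk.le
        _ = (K * lam ^ j) ^ α * |t k| := by ring
        _ = K ^ α * r ^ j * |t k| := by rw [h4]
    have hterm2 : |((|C j s| ^ α - |C j s - t k * A j s| ^ α) / t k)|
        ≤ α * (2 * K) ^ (α - 1) * K * r ^ j := by
      rw [abs_div, div_le_iff₀ htk]
      have hR : (0:ℝ) ≤ 2 * (K * lam ^ j) := by positivity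
      have hb1 : |C j s| ≤ 2 * (K * lam ^ j) := by linarith
      have hb2 : |C j s - t k * A j s| ≤ 2 * (K * lam ^ j) := by
        calc |C j s - t k * A j s| ≤ |C j s| + |t k * A j s| := abs_sub _ _
          _ ≤ K * lam ^ j + |t k| * |A j s| := by rw [abs_mul]; linarith
          _ ≤ K * lam ^ j + 1 * (K * lam ^ j) := by
              have : |t k| * |A j s| ≤ 1 * (K * lam ^ j) :=
                mul_le_mul (ht1 k) hAb (abs_nonneg _) zero_le_one
              linarith
          _ = 2 * (K * lam ^ j) := by ring
      have key := abs_rpow_sub_le hα1 hR hb1 hb2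
      have hdif : |C j s - (C j s - t k * A j s)| = |t k| * |A j s| := by
        rw [show C j s - (C j s - t k * A j s) = t k * A j s by ring, abs_mul]
      rw [hdif] at key
      calc abs (|C j s| ^ α - |C j s - t k * A j s| ^ α)
          ≤ α * (2 * (K * lam ^ j)) ^ (α - 1) * (|t k| * |A j s|) := key
        _ ≤ α * (2 * (K * lam ^ j)) ^ (α - 1) * (|t k| * (K * lam ^ j)) := by
            have h5 : (0:ℝ) ≤ α * (2 * (K * lam ^ j)) ^ (α - 1) := by positivity
            have h6 : |t k| * |A j s| ≤ |t k| * (K * lam ^ j) :=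
              mul_le_mul_of_nonneg_left hAb (abs_nonneg _)
            exact mul_le_mul_of_nonneg_left h6 h5
        _ = α * (2 * (K * lam ^ j)) ^ (α - 1) * (K * lam ^ j) * |t k| := by ring
        _ = α * (2 * K) ^ (α - 1) * K * r ^ j * |t k| := by
            have h7 : (2 * (K * lam ^ j)) ^ (α - 1)
                = (2 * K) ^ (α - 1) * (lam ^ j) ^ (α - 1) := by
              rw [show 2 * (K * lam ^ j) = (2 * K) * lam ^ j by ring,
                Real.mul_rpow (by positivity) (pow_nonneg hlam0.le j)]
            rw [h7]
            have h8 := pow_rpow_comm' hlam0 α j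
            calc α * ((2 * K) ^ (α - 1) * (lam ^ j) ^ (α - 1)) * (K * lam ^ j) * |t k|
                = α * (2 * K) ^ (α - 1) * K * ((lam ^ j) ^ (α - 1) * lam ^ j) * |t k| := by
                  ring
              _ = α * (2 * K) ^ (α - 1) * K * r ^ j * |t k| := by rw [h8]
    calc |(|t k * A j s| ^ α / t k + (|C j s| ^ α - |C j s - t k * A j s| ^ α) / t k)|
        ≤ |(|t k * A j s| ^ α / t k)| + |((|C j s| ^ α - |C j s - t k * A j s| ^ α) / t k)| :=
          abs_add_le _ _
      _ ≤ K ^ α * r ^ j + α * (2 * K) ^ (α - 1) * K * r ^ j := add_le_add hterm1 hterm2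
      _ = c0 * r ^ j := by rw [hc0def]; ring
  -- measurability of the integrands
  have hmeas : ∀ (k j : ℕ), AEStronglyMeasurable
      (fun s => (|t k * A j s| ^ α + |C j s| ^ α - |C j s - t k * A j s| ^ α) / t k) Γ := by
    intro k j
    have hrc : Continuous (fun x : ℝ => x ^ α) := Real.continuous_rpow_const hα0.le
    have h1 : Continuous (fun s => |t k * A j s| ^ α) :=
      hrc.comp (continuous_abs.comp (continuous_const.mul (hAc j)))
    have h2 : Continuous (fun s => |C j s| ^ α) :=
      hrc.comp (continuous_abs.comp (hCc j))
    have h3 : Continuous (fun s => |C j s - t k * A j s| ^ α) :=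
      hrc.comp (continuous_abs.comp ((hCc j).sub (continuous_const.mul (hAc j))))
    exact (((h1.add h2).sub h3).div_const _).aestronglyMeasurable
  -- per-j convergence of the integrals
  have hj : ∀ j : ℕ, Tendsto (fun k => (∫ s, (|t k * A j s| ^ α + |C j s| ^ α
      - |C j s - t k * A j s| ^ α) ∂Γ) / t k) atTop
      (𝓝 (∫ s, α * (A j s * spow (C j s) (α - 1)) ∂Γ)) := by
    intro j
    have hrw : ∀ k : ℕ, (∫ s, (|t k * A j s| ^ α + |C j s| ^ α
        - |C j s - t k * A j s| ^ α) ∂Γ) / t k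
        = ∫ s, (|t k * A j s| ^ α + |C j s| ^ α - |C j s - t k * A j s| ^ α) / t k ∂Γ := by
      intro k
      rw [integral_div]
    simp only [hrw]
    apply tendsto_integral_of_dominated_convergence (fun _ => c0 * r ^ j) (hmeas · j)
      (integrable_const _)
    · intro k
      exact ae_of_all _ fun s => by
        rw [Real.norm_eq_abs]; exact hptb k j s
    · exact ae_of_all _ fun s => ptlim hα1 (A j s) (C j s) ht0 ht
  -- dominated convergence for the sum
  have hsum : Summable (fun j : ℕ => c0 * r ^ j * m) :=
    ((summable_geometric_of_lt_one hr0.le hr1).mul_left c0).mul_right m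
  refine tendsto_tsum_of_dominated_convergence hsum hj (Eventually.of_forall fun k => ?_)
  intro j
  have hrw : (∫ s, (|t k * A j s| ^ α + |C j s| ^ α
      - |C j s - t k * A j s| ^ α) ∂Γ) / t k
      = ∫ s, (|t k * A j s| ^ α + |C j s| ^ α - |C j s - t k * A j s| ^ α) / t k ∂Γ := by
    rw [integral_div]
  rw [hrw]
  calc ‖∫ s, (|t k * A j s| ^ α + |C j s| ^ α - |C j s - t k * A j s| ^ α) / t k ∂Γ‖
      ≤ ∫ s, (fun _ : Sphere2 => c0 * r ^ j) s ∂Γ :=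
        norm_integral_le_of_norm_le (integrable_const _)
          (ae_of_all _ fun s => by rw [Real.norm_eq_abs]; exact hptb k j s)
    _ = c0 * r ^ j * m := by
        rw [integral_const, smul_eq_mul, hm, measureReal_def]; ring

/-- Integrability plus an integral bound for `A * spow C p`. -/
lemma int_bound (Γ : Measure Sphere2) [IsFiniteMeasure Γ] {p : ℝ} (hp : 0 ≤ p)
    (A C : Sphere2 → ℝ) (hAc : Continuous A) (hCc : Continuous C)
    {MA MC : ℝ} (hMC : 0 ≤ MC) (hA : ∀ s, |A s| ≤ MA) (hC : ∀ s, |C s| ≤ MC) :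
    Integrable (fun s => A s * spow (C s) p) Γ ∧
    ‖∫ s, A s * spow (C s) p ∂Γ‖ ≤ MA * MC ^ p * (Γ Set.univ).toReal := by
  have hb : ∀ s, ‖A s * spow (C s) p‖ ≤ MA * MC ^ p := by
    intro s
    rw [Real.norm_eq_abs, abs_mul]
    have h1 : |spow (C s) p| ≤ |C s| ^ p := abs_spow_le _ _
    have h2 : |C s| ^ p ≤ MC ^ p := Real.rpow_le_rpow (abs_nonneg _) (hC s) hp
    exact mul_le_mul (hA s) (h1.trans h2) (abs_nonneg _) ((abs_nonneg (A s)).trans (hA s))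
  have hmeas : AEStronglyMeasurable (fun s => A s * spow (C s) p) Γ :=
    (hAc.measurable.mul ((measurable_spow p).comp hCc.measurable)).aestronglyMeasurable
  refine ⟨(integrable_const (MA * MC ^ p)).mono' hmeas (ae_of_all _ hb), ?_⟩
  calc ‖∫ s, A s * spow (C s) p ∂Γ‖
      ≤ ∫ _s, MA * MC ^ p ∂Γ :=
        norm_integral_le_of_norm_le (integrable_const _) (ae_of_all _ hb)
    _ = MA * MC ^ p * (Γ Set.univ).toReal := by
        rw [integral_const, smul_eq_mul, measureReal_def]; ring

lemma sphere_abs1 (s : Sphere2) : |s.1.1| ≤ 1 := by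
  obtain ⟨⟨x, y⟩, hxy⟩ := s
  simp only at hxy ⊢
  nlinarith [sq_abs x, sq_nonneg y, abs_nonneg x]

lemma sphere_abs2 (s : Sphere2) : |s.1.2| ≤ 1 := by
  obtain ⟨⟨x, y⟩, hxy⟩ := s
  simp only at hxy ⊢
  nlinarith [sq_abs y, sq_nonneg x, abs_nonneg y]


section Bounds

variable {a1 a2 a3 a4 l1 : ℝ}

lemma A3_bound (hl : l1 ≠ 0) (habs : |l1| < 1) (j : ℕ) (s : Sphere2) :
    |A3 a1 a2 a3 a4 l1 (-l1) j s|
      ≤ ((|a1| + |a2| + |a3| + |a4| + 2) / |l1| + 1) * |l1| ^ j := by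
  set lam := |l1| with hlamdef
  have hlam0 : 0 < lam := abs_pos.mpr hl
  set P : ℝ := |a1| + |a2| + |a3| + |a4| + 2 with hPdef
  have hP0 : (0:ℝ) < P := by positivity
  have hs1 := sphere_abs1 s
  have hs2 := sphere_abs2 s
  have hpj : (0:ℝ) ≤ lam ^ j := pow_nonneg hlam0.le j
  unfold A3
  rw [abs_div]
  have hden : |(-l1) - l1| = 2 * lam := by
    rw [show (-l1) - l1 = -(2 * l1) by ring, abs_neg, abs_mul, abs_two]
  rw [hden]
  have hN : |(-(l1 ^ j * a3 * s.1.1) + (-l1) * l1 ^ j * s.1.2 - l1 ^ j * a4 * s.1.2)|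
      ≤ lam ^ j * P := by
    have e1 : |(-(l1 ^ j * a3 * s.1.1))| = lam ^ j * (|a3| * |s.1.1|) := by
      rw [abs_neg, abs_mul, abs_mul, abs_pow]; ring
    have e2 : |(-l1) * l1 ^ j * s.1.2| = lam ^ j * (lam * |s.1.2|) := by
      rw [abs_mul, abs_mul, abs_neg, abs_pow]; ring
    have e3 : |l1 ^ j * a4 * s.1.2| = lam ^ j * (|a4| * |s.1.2|) := by
      rw [abs_mul, abs_mul, abs_pow]; ring
    have t1 : |a3| * |s.1.1| ≤ |a3| := mul_le_of_le_one_right (abs_nonneg _) hs1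
    have t2 : lam * |s.1.2| ≤ 1 :=
      le_trans (mul_le_of_le_one_right hlam0.le hs2) habs.le
    have t3 : |a4| * |s.1.2| ≤ |a4| := mul_le_of_le_one_right (abs_nonneg _) hs2
    have hsum : |a3| * |s.1.1| + lam * |s.1.2| + |a4| * |s.1.2| ≤ P := by
      rw [hPdef]; linarith [abs_nonneg a1, abs_nonneg a2]
    calc |(-(l1 ^ j * a3 * s.1.1) + (-l1) * l1 ^ j * s.1.2 - l1 ^ j * a4 * s.1.2)|
        ≤ |(-(l1 ^ j * a3 * s.1.1) + (-l1) * l1 ^ j * s.1.2)| + |l1 ^ j * a4 * s.1.2| :=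
          abs_sub _ _
      _ ≤ |(-(l1 ^ j * a3 * s.1.1))| + |(-l1) * l1 ^ j * s.1.2| + |l1 ^ j * a4 * s.1.2| := by
          have := abs_add_le (-(l1 ^ j * a3 * s.1.1)) ((-l1) * l1 ^ j * s.1.2)
          linarith
      _ = lam ^ j * (|a3| * |s.1.1| + lam * |s.1.2| + |a4| * |s.1.2|) := by
          rw [e1, e2, e3]; ring
      _ ≤ lam ^ j * P := mul_le_mul_of_nonneg_left hsum hpj
  calc |(-(l1 ^ j * a3 * s.1.1) + (-l1) * l1 ^ j * s.1.2 - l1 ^ j * a4 * s.1.2)| / (2 * lam)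
      ≤ (lam ^ j * P) / (2 * lam) := by gcongr
    _ = lam ^ j * (P / (2 * lam)) := by ring
    _ ≤ lam ^ j * (P / lam + 1) := by
        have h1 : P / (2 * lam) ≤ P / lam := by gcongr; linarith
        exact mul_le_mul_of_nonneg_left (by linarith) hpj
    _ = (P / lam + 1) * lam ^ j := by ring

lemma B3_bound (hl : l1 ≠ 0) (habs : |l1| < 1) (j : ℕ) (s : Sphere2) :
    |B3 a1 a2 a3 a4 l1 (-l1) j s|
      ≤ ((|a1| + |a2| + |a3| + |a4| + 2) / |l1| + 1) * |l1| ^ j := by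
  set lam := |l1| with hlamdef
  have hlam0 : 0 < lam := abs_pos.mpr hl
  set P : ℝ := |a1| + |a2| + |a3| + |a4| + 2 with hPdef
  have hP0 : (0:ℝ) < P := by positivity
  have hs1 := sphere_abs1 s
  have hs2 := sphere_abs2 s
  have hpj : (0:ℝ) ≤ lam ^ j := pow_nonneg hlam0.le j
  unfold B3
  rw [abs_div]
  have hden : |(-l1) - l1| = 2 * lam := by
    rw [show (-l1) - l1 = -(2 * l1) by ring, abs_neg, abs_mul, abs_two]
  rw [hden]
  have hN : |((-l1) ^ j * a3 * s.1.1 - l1 * (-l1) ^ j * s.1.2 + (-l1) ^ j * a4 * s.1.2)|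
      ≤ lam ^ j * P := by
    have hnp : |(-l1 : ℝ) ^ j| = lam ^ j := by rw [abs_pow, abs_neg]
    have e1 : |(-l1 : ℝ) ^ j * a3 * s.1.1| = lam ^ j * (|a3| * |s.1.1|) := by
      rw [abs_mul, abs_mul, hnp]; ring
    have e2 : |l1 * (-l1) ^ j * s.1.2| = lam ^ j * (lam * |s.1.2|) := by
      rw [abs_mul, abs_mul, hnp]; ring
    have e3 : |(-l1 : ℝ) ^ j * a4 * s.1.2| = lam ^ j * (|a4| * |s.1.2|) := by
      rw [abs_mul, abs_mul, hnp]; ring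
    have t1 : |a3| * |s.1.1| ≤ |a3| := mul_le_of_le_one_right (abs_nonneg _) hs1
    have t2 : lam * |s.1.2| ≤ 1 :=
      le_trans (mul_le_of_le_one_right hlam0.le hs2) habs.le
    have t3 : |a4| * |s.1.2| ≤ |a4| := mul_le_of_le_one_right (abs_nonneg _) hs2
    have hsum : |a3| * |s.1.1| + lam * |s.1.2| + |a4| * |s.1.2| ≤ P := by
      rw [hPdef]; linarith [abs_nonneg a1, abs_nonneg a2]
    calc |((-l1) ^ j * a3 * s.1.1 - l1 * (-l1) ^ j * s.1.2 + (-l1) ^ j * a4 * s.1.2)|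
        ≤ |((-l1) ^ j * a3 * s.1.1 - l1 * (-l1) ^ j * s.1.2)| + |(-l1 : ℝ) ^ j * a4 * s.1.2| :=
          abs_add_le _ _
      _ ≤ |(-l1 : ℝ) ^ j * a3 * s.1.1| + |l1 * (-l1) ^ j * s.1.2| + |(-l1 : ℝ) ^ j * a4 * s.1.2| := by
          have := abs_sub ((-l1 : ℝ) ^ j * a3 * s.1.1) (l1 * (-l1) ^ j * s.1.2)
          linarith
      _ = lam ^ j * (|a3| * |s.1.1| + lam * |s.1.2| + |a4| * |s.1.2|) := by
          rw [e1, e2, e3]; ring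
      _ ≤ lam ^ j * P := mul_le_mul_of_nonneg_left hsum hpj
  calc |((-l1) ^ j * a3 * s.1.1 - l1 * (-l1) ^ j * s.1.2 + (-l1) ^ j * a4 * s.1.2)| / (2 * lam)
      ≤ (lam ^ j * P) / (2 * lam) := by gcongr
    _ = lam ^ j * (P / (2 * lam)) := by ring
    _ ≤ lam ^ j * (P / lam + 1) := by
        have h1 : P / (2 * lam) ≤ P / lam := by gcongr; linarith
        exact mul_le_mul_of_nonneg_left (by linarith) hpj
    _ = (P / lam + 1) * lam ^ j := by ring

lemma C3_bound (hl : l1 ≠ 0) (habs : |l1| < 1) (j : ℕ) (s : Sphere2) :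
    |C3 a1 a2 a3 a4 l1 (-l1) j s|
      ≤ ((|a1| + |a2| + |a3| + |a4| + 2) / |l1| + 1) * |l1| ^ j := by
  set lam := |l1| with hlamdef
  have hlam0 : 0 < lam := abs_pos.mpr hl
  set P : ℝ := |a1| + |a2| + |a3| + |a4| + 2 with hPdef
  have hP0 : (0:ℝ) < P := by positivity
  have hs1 := sphere_abs1 s
  have hs2 := sphere_abs2 s
  have hpj : (0:ℝ) ≤ lam ^ j := pow_nonneg hlam0.le j
  unfold C3
  rw [abs_div]
  have hden : |(-l1) - l1| = 2 * lam := by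
    rw [show (-l1) - l1 = -(2 * l1) by ring, abs_neg, abs_mul, abs_two]
  rw [hden]
  have hX : |(-l1) * s.1.1 - a1 * s.1.1 - a2 * s.1.2| ≤ 1 + |a1| + |a2| := by
    have h1 : |(-l1) * s.1.1| ≤ 1 := by
      rw [abs_mul, abs_neg]
      exact le_trans (mul_le_of_le_one_right hlam0.le hs1) habs.le
    have h2 : |a1 * s.1.1| ≤ |a1| := by
      rw [abs_mul]; exact mul_le_of_le_one_right (abs_nonneg _) hs1
    have h3 : |a2 * s.1.2| ≤ |a2| := by
      rw [abs_mul]; exact mul_le_of_le_one_right (abs_nonneg _) hs2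
    calc |(-l1) * s.1.1 - a1 * s.1.1 - a2 * s.1.2|
        ≤ |(-l1) * s.1.1 - a1 * s.1.1| + |a2 * s.1.2| := abs_sub _ _
      _ ≤ |(-l1) * s.1.1| + |a1 * s.1.1| + |a2 * s.1.2| := by
          have := abs_sub ((-l1) * s.1.1) (a1 * s.1.1)
          linarith
      _ ≤ 1 + |a1| + |a2| := by linarith
  have hY : |(-(l1 * s.1.1)) + a1 * s.1.1 + a2 * s.1.2| ≤ 1 + |a1| + |a2| := by
    have h1 : |(-(l1 * s.1.1))| ≤ 1 := by
      rw [abs_neg, abs_mul]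
      exact le_trans (mul_le_of_le_one_right hlam0.le hs1) habs.le
    have h2 : |a1 * s.1.1| ≤ |a1| := by
      rw [abs_mul]; exact mul_le_of_le_one_right (abs_nonneg _) hs1
    have h3 : |a2 * s.1.2| ≤ |a2| := by
      rw [abs_mul]; exact mul_le_of_le_one_right (abs_nonneg _) hs2
    calc |(-(l1 * s.1.1)) + a1 * s.1.1 + a2 * s.1.2|
        ≤ |(-(l1 * s.1.1)) + a1 * s.1.1| + |a2 * s.1.2| := abs_add_le _ _
      _ ≤ |(-(l1 * s.1.1))| + |a1 * s.1.1| + |a2 * s.1.2| := by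
          have := abs_add_le (-(l1 * s.1.1)) (a1 * s.1.1)
          linarith
      _ ≤ 1 + |a1| + |a2| := by linarith
  have hN : |l1 ^ j * ((-l1) * s.1.1 - a1 * s.1.1 - a2 * s.1.2)
      + (-l1) ^ j * (-(l1 * s.1.1) + a1 * s.1.1 + a2 * s.1.2)| ≤ lam ^ j * (2 * P) := by
    have hnp : |(-l1 : ℝ) ^ j| = lam ^ j := by rw [abs_pow, abs_neg]
    calc |l1 ^ j * ((-l1) * s.1.1 - a1 * s.1.1 - a2 * s.1.2)
        + (-l1) ^ j * (-(l1 * s.1.1) + a1 * s.1.1 + a2 * s.1.2)|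
        ≤ |l1 ^ j * ((-l1) * s.1.1 - a1 * s.1.1 - a2 * s.1.2)|
          + |(-l1 : ℝ) ^ j * (-(l1 * s.1.1) + a1 * s.1.1 + a2 * s.1.2)| := abs_add_le _ _
      _ = lam ^ j * |(-l1) * s.1.1 - a1 * s.1.1 - a2 * s.1.2|
          + lam ^ j * |(-(l1 * s.1.1)) + a1 * s.1.1 + a2 * s.1.2| := by
          rw [abs_mul, abs_mul, hnp, abs_pow]
      _ ≤ lam ^ j * (1 + |a1| + |a2|) + lam ^ j * (1 + |a1| + |a2|) := by
          have b1 := mul_le_mul_of_nonneg_left hX hpj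
          have b2 := mul_le_mul_of_nonneg_left hY hpj
          linarith
      _ ≤ lam ^ j * (2 * P) := by
          have : 1 + |a1| + |a2| ≤ P := by
            rw [hPdef]; linarith [abs_nonneg a3, abs_nonneg a4]
          nlinarith
  calc |l1 ^ j * ((-l1) * s.1.1 - a1 * s.1.1 - a2 * s.1.2)
      + (-l1) ^ j * (-(l1 * s.1.1) + a1 * s.1.1 + a2 * s.1.2)| / (2 * lam)
      ≤ (lam ^ j * (2 * P)) / (2 * lam) := by gcongr
    _ = lam ^ j * (P / lam) := by field_simp
    _ ≤ lam ^ j * (P / lam + 1) := by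
        exact mul_le_mul_of_nonneg_left (by linarith) hpj
    _ = (P / lam + 1) * lam ^ j := by ring

lemma A3_continuous (a1 a2 a3 a4 l1 l2 : ℝ) (j : ℕ) :
    Continuous (A3 a1 a2 a3 a4 l1 l2 j) := by
  unfold A3; fun_prop

lemma B3_continuous (a1 a2 a3 a4 l1 l2 : ℝ) (j : ℕ) :
    Continuous (B3 a1 a2 a3 a4 l1 l2 j) := by
  unfold B3; fun_prop

lemma C3_continuous (a1 a2 a3 a4 l1 l2 : ℝ) (j : ℕ) :
    Continuous (C3 a1 a2 a3 a4 l1 l2 j) := by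
  unfold C3; fun_prop

end Bounds

lemma intAspow (Γ : Measure Sphere2) [IsFiniteMeasure Γ] {α : ℝ} (hα1 : 1 < α)
    (A C : ℕ → Sphere2 → ℝ) (hAc : ∀ j, Continuous (A j)) (hCc : ∀ j, Continuous (C j))
    {K lam : ℝ} (hK : 0 < K) (hlam0 : 0 < lam) (hlam1 : lam < 1)
    (hA : ∀ j s, |A j s| ≤ K * lam ^ j) (hC : ∀ j s, |C j s| ≤ K * lam ^ j) :
    (∀ j, Integrable (fun s => A j s * spow (C j s) (α - 1)) Γ) ∧
    Summable (fun j => ∫ s, A j s * spow (C j s) (α - 1) ∂Γ) := by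
  have hp : (0:ℝ) ≤ α - 1 := by linarith
  have hib : ∀ j, Integrable (fun s => A j s * spow (C j s) (α - 1)) Γ ∧
      ‖∫ s, A j s * spow (C j s) (α - 1) ∂Γ‖
        ≤ (K * lam ^ j) * (K * lam ^ j) ^ (α - 1) * (Γ Set.univ).toReal :=
    fun j => int_bound Γ hp (A j) (C j) (hAc j) (hCc j) (by positivity) (hA j) (hC j)
  refine ⟨fun j => (hib j).1, ?_⟩
  have hr0 : (0:ℝ) < lam ^ α := Real.rpow_pos_of_pos hlam0 α
  have hr1 : lam ^ α < 1 := Real.rpow_lt_one hlam0.le hlam1 (by linarith)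
  have hgeom : Summable (fun j : ℕ => K ^ α * (lam ^ α) ^ j * (Γ Set.univ).toReal) :=
    ((summable_geometric_of_lt_one hr0.le hr1).mul_left (K ^ α)).mul_right _
  apply Summable.of_norm_bounded hgeom
  intro j
  have heq : (K * lam ^ j) * (K * lam ^ j) ^ (α - 1) = K ^ α * (lam ^ α) ^ j := by
    rw [Real.mul_rpow hK.le (pow_nonneg hlam0.le j)]
    have h8 := pow_rpow_comm' hlam0 α j
    have h9 : K ^ α = K ^ (α - 1) * K := by
      rw [← Real.rpow_add_one (ne_of_gt hK)]; congr 1; ring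
    calc K * lam ^ j * (K ^ (α - 1) * (lam ^ j) ^ (α - 1))
        = (K ^ (α - 1) * K) * ((lam ^ j) ^ (α - 1) * lam ^ j) := by ring
      _ = K ^ α * (lam ^ α) ^ j := by rw [← h9, h8]
  calc ‖∫ s, A j s * spow (C j s) (α - 1) ∂Γ‖
      ≤ (K * lam ^ j) * (K * lam ^ j) ^ (α - 1) * (Γ Set.univ).toReal := (hib j).2
    _ = K ^ α * (lam ^ α) ^ j * (Γ Set.univ).toReal := by rw [heq]

lemma tsum_int_add (Γ : Measure Sphere2) [IsFiniteMeasure Γ] {α : ℝ} (hα1 : 1 < α)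
    (A B C : ℕ → Sphere2 → ℝ) (hAc : ∀ j, Continuous (A j)) (hBc : ∀ j, Continuous (B j))
    (hCc : ∀ j, Continuous (C j))
    {K lam : ℝ} (hK : 0 < K) (hlam0 : 0 < lam) (hlam1 : lam < 1)
    (hA : ∀ j s, |A j s| ≤ K * lam ^ j) (hB : ∀ j s, |B j s| ≤ K * lam ^ j)
    (hC : ∀ j s, |C j s| ≤ K * lam ^ j) :
    ∑' j : ℕ, ∫ s, α * ((A j s + B j s) * spow (C j s) (α - 1)) ∂Γ
      = α * ((∑' j : ℕ, ∫ s, A j s * spow (C j s) (α - 1) ∂Γ)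
          + ∑' j : ℕ, ∫ s, B j s * spow (C j s) (α - 1) ∂Γ) := by
  obtain ⟨hiA, hsA⟩ := intAspow Γ hα1 A C hAc hCc hK hlam0 hlam1 hA hC
  obtain ⟨hiB, hsB⟩ := intAspow Γ hα1 B C hBc hCc hK hlam0 hlam1 hB hC
  have h1 : ∀ j : ℕ, ∫ s, α * ((A j s + B j s) * spow (C j s) (α - 1)) ∂Γ
      = α * ((∫ s, A j s * spow (C j s) (α - 1) ∂Γ)
          + ∫ s, B j s * spow (C j s) (α - 1) ∂Γ) := by
    intro j
    rw [integral_const_mul]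
    congr 1
    rw [← integral_add (hiA j) (hiB j)]
    congr 1
    funext s
    ring
  rw [tsum_congr h1, tsum_mul_left, Summable.tsum_add hsA hsB]

theorem CD_pos_asymptotic_cases_IV_V
    (Γ : Measure Sphere2) [IsFiniteMeasure Γ]
    (α a1 a2 a3 a4 l1 l2 : ℝ) (hα1 : 1 < α) (hα2 : α < 2)
    (hl1 : l1 ^ 2 - (a1 + a4) * l1 + (a1 * a4 - a2 * a3) = 0)
    (hl2 : l2 ^ 2 - (a1 + a4) * l2 + (a1 * a4 - a2 * a3) = 0)
    (hne : l1 ≠ l2) (habs1 : |l1| < 1) (habs2 : |l2| < 1)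
    (hopp : l2 = -l1) (hl0 : 0 < |l1|) :
    Tendsto (fun k : ℕ => CDpos Γ α a1 a2 a3 a4 l1 l2 (2 * k) / l1 ^ (2 * k)) atTop
        (𝓝 (α * (D4 Γ α a1 a2 a3 a4 l1 l2 + D5 Γ α a1 a2 a3 a4 l1 l2))) ∧
    Tendsto (fun k : ℕ => CDpos Γ α a1 a2 a3 a4 l1 l2 (2 * k + 1) / l1 ^ (2 * k + 1)) atTop
        (𝓝 (α * (D4 Γ α a1 a2 a3 a4 l1 l2 - D5 Γ α a1 a2 a3 a4 l1 l2))) := by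
  subst hopp
  have hl1ne : l1 ≠ 0 := fun h => by simp [h] at hl0
  have hlam0 : (0:ℝ) < |l1| := hl0
  have hlam1 : |l1| < 1 := habs1
  have hK : (0:ℝ) < (|a1| + |a2| + |a3| + |a4| + 2) / |l1| + 1 := by positivity
  set K : ℝ := (|a1| + |a2| + |a3| + |a4| + 2) / |l1| + 1 with hKdef
  -- bounds
  have hA3b : ∀ (j : ℕ) (s : Sphere2), |A3 a1 a2 a3 a4 l1 (-l1) j s| ≤ K * |l1| ^ j :=
    fun j s => A3_bound hl1ne habs1 j s
  have hB3b : ∀ (j : ℕ) (s : Sphere2), |B3 a1 a2 a3 a4 l1 (-l1) j s| ≤ K * |l1| ^ j :=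
    fun j s => B3_bound hl1ne habs1 j s
  have hC3b : ∀ (j : ℕ) (s : Sphere2), |C3 a1 a2 a3 a4 l1 (-l1) j s| ≤ K * |l1| ^ j :=
    fun j s => C3_bound hl1ne habs1 j s
  have hC3b2 : ∀ (j : ℕ) (s : Sphere2), |C3 a1 a2 a3 a4 l1 (-l1) j s| ≤ (2 * K) * |l1| ^ j := by
    intro j s
    refine (hC3b j s).trans ?_
    have : (0:ℝ) ≤ K * |l1| ^ j := by positivity
    nlinarith [pow_nonneg (abs_nonneg l1) j]
  have hsq : |l1 ^ 2| < 1 := by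
    rw [abs_pow]
    nlinarith [abs_nonneg l1]
  have htends : Tendsto (fun k : ℕ => (l1 ^ 2) ^ k) atTop (𝓝 0) :=
    tendsto_pow_atTop_nhds_zero_of_abs_lt_one hsq
  constructor
  · -- even case
    set AB : ℕ → Sphere2 → ℝ := fun j s =>
      A3 a1 a2 a3 a4 l1 (-l1) j s + B3 a1 a2 a3 a4 l1 (-l1) j s with hABdef
    have hABc : ∀ j, Continuous (AB j) :=
      fun j => (A3_continuous a1 a2 a3 a4 l1 (-l1) j).add (B3_continuous a1 a2 a3 a4 l1 (-l1) j)
    have hABb : ∀ (j : ℕ) (s : Sphere2), |AB j s| ≤ (2 * K) * |l1| ^ j := by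
      intro j s
      calc |AB j s| ≤ |A3 a1 a2 a3 a4 l1 (-l1) j s| + |B3 a1 a2 a3 a4 l1 (-l1) j s| :=
            abs_add_le _ _
        _ ≤ K * |l1| ^ j + K * |l1| ^ j := add_le_add (hA3b j s) (hB3b j s)
        _ = (2 * K) * |l1| ^ j := by ring
    have ht0 : ∀ k : ℕ, l1 ^ (2 * k) ≠ 0 := fun k => pow_ne_zero _ hl1ne
    have ht1 : ∀ k : ℕ, |l1 ^ (2 * k)| ≤ 1 := by
      intro k
      rw [abs_pow]
      exact pow_le_one₀ (abs_nonneg l1) habs1.le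
    have ht : Tendsto (fun k : ℕ => l1 ^ (2 * k)) atTop (𝓝 0) := by
      simpa [pow_mul] using htends
    have hkey := key_tendsto_s7 Γ hα1 AB (C3 a1 a2 a3 a4 l1 (-l1)) hABc
      (C3_continuous a1 a2 a3 a4 l1 (-l1)) (by positivity : (0:ℝ) < 2 * K) hlam0 hlam1
      hABb hC3b2 ht0 ht1 ht
    have hfun : (fun k : ℕ => CDpos Γ α a1 a2 a3 a4 l1 (-l1) (2 * k) / l1 ^ (2 * k))
        = fun k : ℕ => ∑' j : ℕ, (∫ s, (|l1 ^ (2 * k) * AB j s| ^ α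
            + |C3 a1 a2 a3 a4 l1 (-l1) j s| ^ α
            - |C3 a1 a2 a3 a4 l1 (-l1) j s - l1 ^ (2 * k) * AB j s| ^ α) ∂Γ) / l1 ^ (2 * k) := by
      funext k
      unfold CDpos
      rw [← tsum_div_const]
      apply tsum_congr
      intro j
      congr 1
      congr 1
      funext s
      have harg : l1 ^ (2 * k) * A3 a1 a2 a3 a4 l1 (-l1) j s
          + (-l1) ^ (2 * k) * B3 a1 a2 a3 a4 l1 (-l1) j s = l1 ^ (2 * k) * AB j s := by
        rw [Even.neg_pow ⟨k, by ring⟩, hABdef]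
        ring
      rw [harg]
    have hL : (∑' j : ℕ, ∫ s, α * (AB j s
        * spow (C3 a1 a2 a3 a4 l1 (-l1) j s) (α - 1)) ∂Γ)
        = α * (D4 Γ α a1 a2 a3 a4 l1 (-l1) + D5 Γ α a1 a2 a3 a4 l1 (-l1)) := by
      rw [D4, D5]
      exact tsum_int_add Γ hα1 _ _ _ (A3_continuous a1 a2 a3 a4 l1 (-l1))
        (B3_continuous a1 a2 a3 a4 l1 (-l1)) (C3_continuous a1 a2 a3 a4 l1 (-l1))
        hK hlam0 hlam1 hA3b hB3b hC3b
    rw [hfun, ← hL]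
    exact hkey
  · -- odd case
    set AB : ℕ → Sphere2 → ℝ := fun j s =>
      A3 a1 a2 a3 a4 l1 (-l1) j s - B3 a1 a2 a3 a4 l1 (-l1) j s with hABdef
    have hABc : ∀ j, Continuous (AB j) :=
      fun j => (A3_continuous a1 a2 a3 a4 l1 (-l1) j).sub (B3_continuous a1 a2 a3 a4 l1 (-l1) j)
    have hABb : ∀ (j : ℕ) (s : Sphere2), |AB j s| ≤ (2 * K) * |l1| ^ j := by
      intro j s
      calc |AB j s| ≤ |A3 a1 a2 a3 a4 l1 (-l1) j s| + |B3 a1 a2 a3 a4 l1 (-l1) j s| :=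
            abs_sub _ _
        _ ≤ K * |l1| ^ j + K * |l1| ^ j := add_le_add (hA3b j s) (hB3b j s)
        _ = (2 * K) * |l1| ^ j := by ring
    have ht0 : ∀ k : ℕ, l1 ^ (2 * k + 1) ≠ 0 := fun k => pow_ne_zero _ hl1ne
    have ht1 : ∀ k : ℕ, |l1 ^ (2 * k + 1)| ≤ 1 := by
      intro k
      rw [abs_pow]
      exact pow_le_one₀ (abs_nonneg l1) habs1.le
    have ht : Tendsto (fun k : ℕ => l1 ^ (2 * k + 1)) atTop (𝓝 0) := by
      have := htends.mul_const l1
      simpa [pow_succ, pow_mul] using this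
    have hkey := key_tendsto_s7 Γ hα1 AB (C3 a1 a2 a3 a4 l1 (-l1)) hABc
      (C3_continuous a1 a2 a3 a4 l1 (-l1)) (by positivity : (0:ℝ) < 2 * K) hlam0 hlam1
      hABb hC3b2 ht0 ht1 ht
    have hfun : (fun k : ℕ => CDpos Γ α a1 a2 a3 a4 l1 (-l1) (2 * k + 1) / l1 ^ (2 * k + 1))
        = fun k : ℕ => ∑' j : ℕ, (∫ s, (|l1 ^ (2 * k + 1) * AB j s| ^ α
            + |C3 a1 a2 a3 a4 l1 (-l1) j s| ^ α
            - |C3 a1 a2 a3 a4 l1 (-l1) j s - l1 ^ (2 * k + 1) * AB j s| ^ α) ∂Γ)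
              / l1 ^ (2 * k + 1) := by
      funext k
      unfold CDpos
      rw [← tsum_div_const]
      apply tsum_congr
      intro j
      congr 1
      congr 1
      funext s
      have harg : l1 ^ (2 * k + 1) * A3 a1 a2 a3 a4 l1 (-l1) j s
          + (-l1) ^ (2 * k + 1) * B3 a1 a2 a3 a4 l1 (-l1) j s = l1 ^ (2 * k + 1) * AB j s := by
        rw [Odd.neg_pow ⟨k, rfl⟩, hABdef]
        ring
      rw [harg]
    have hL : (∑' j : ℕ, ∫ s, α * (AB j s
        * spow (C3 a1 a2 a3 a4 l1 (-l1) j s) (α - 1)) ∂Γ)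
        = α * (D4 Γ α a1 a2 a3 a4 l1 (-l1) - D5 Γ α a1 a2 a3 a4 l1 (-l1)) := by
      have hBneg : ∀ (j : ℕ) (s : Sphere2), |-(B3 a1 a2 a3 a4 l1 (-l1) j s)| ≤ K * |l1| ^ j := by
        intro j s; rw [abs_neg]; exact hB3b j s
      have h := tsum_int_add Γ hα1 (A3 a1 a2 a3 a4 l1 (-l1))
        (fun j s => -(B3 a1 a2 a3 a4 l1 (-l1) j s)) (C3 a1 a2 a3 a4 l1 (-l1))
        (A3_continuous a1 a2 a3 a4 l1 (-l1))
        (fun j => (B3_continuous a1 a2 a3 a4 l1 (-l1) j).neg)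
        (C3_continuous a1 a2 a3 a4 l1 (-l1)) hK hlam0 hlam1 hA3b hBneg hC3b
      have e1 : (∑' j : ℕ, ∫ s, α * (AB j s
          * spow (C3 a1 a2 a3 a4 l1 (-l1) j s) (α - 1)) ∂Γ)
          = ∑' j : ℕ, ∫ s, α * ((A3 a1 a2 a3 a4 l1 (-l1) j s
            + -(B3 a1 a2 a3 a4 l1 (-l1) j s))
            * spow (C3 a1 a2 a3 a4 l1 (-l1) j s) (α - 1)) ∂Γ := by
        apply tsum_congr; intro j
        congr 1
      have e2 : (∑' j : ℕ, ∫ s, -(B3 a1 a2 a3 a4 l1 (-l1) j s)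
          * spow (C3 a1 a2 a3 a4 l1 (-l1) j s) (α - 1) ∂Γ)
          = -∑' j : ℕ, ∫ s, B3 a1 a2 a3 a4 l1 (-l1) j s
            * spow (C3 a1 a2 a3 a4 l1 (-l1) j s) (α - 1) ∂Γ := by
        rw [← tsum_neg]
        apply tsum_congr; intro j
        rw [← integral_neg]
        congr 1; funext s; ring
      rw [e1, h, e2, D4, D5]
      ring
    rw [hfun, ← hL]
    exact hkey
end

section
/- Under the stated setup, if |λ₁| > |λ₂| then lim_{h→∞} CV⁺(h)/(λ₁ʰ)^⟨α−1⟩ = D₇; equivalently, the cross-covariation CV(X₁(t),X₂(t+h)) is asymptotically D₇·(λ₁ʰ)^⟨α−1⟩ as h → ∞. -/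
open MeasureTheory Filter Topology

section Aux

lemma mySign_mul (x y : ℝ) : Real.sign (x * y) = Real.sign x * Real.sign y := by
  rcases lt_trichotomy x 0 with hx|rfl|hx
  · rcases lt_trichotomy y 0 with hy|rfl|hy
    · rw [Real.sign_of_pos (mul_pos_of_neg_of_neg hx hy), Real.sign_of_neg hx,
        Real.sign_of_neg hy]; norm_num
    · simp [Real.sign_zero]
    · rw [Real.sign_of_neg (mul_neg_of_neg_of_pos hx hy), Real.sign_of_neg hx,
        Real.sign_of_pos hy]; norm_num
  · simp [Real.sign_zero]
  · rcases lt_trichotomy y 0 with hy|rfl|hy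
    · rw [Real.sign_of_neg (mul_neg_of_pos_of_neg hx hy), Real.sign_of_pos hx,
        Real.sign_of_neg hy]; norm_num
    · simp [Real.sign_zero]
    · rw [Real.sign_of_pos (mul_pos hx hy), Real.sign_of_pos hx, Real.sign_of_pos hy]; norm_num

lemma spow_mul_eq (x y p : ℝ) : spow (x * y) p = spow x p * spow y p := by
  unfold spow
  rw [abs_mul, Real.mul_rpow (abs_nonneg x) (abs_nonneg y), mySign_mul]; ring

lemma spow_ne_zero {x : ℝ} (hx : x ≠ 0) (p : ℝ) : spow x p ≠ 0 := by
  unfold spow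
  exact mul_ne_zero (Real.rpow_pos_of_pos (abs_pos.2 hx) p).ne'
    (fun h => hx (Real.sign_eq_zero_iff.1 h))

lemma abs_sign_le (x : ℝ) : |Real.sign x| ≤ 1 := by
  rcases Real.sign_apply_eq x with h|h|h <;> simp [h]

lemma continuous_spow {p : ℝ} (hp : 0 < p) : Continuous fun x : ℝ => spow x p := by
  have hg : Continuous fun x : ℝ => |x| ^ p :=
    continuous_abs.rpow_const (fun x => Or.inr hp.le)
  rw [continuous_iff_continuousAt]
  intro a
  rcases lt_trichotomy a 0 with h|rfl|h
  · refine hg.neg.continuousAt.congr ?_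
    filter_upwards [isOpen_Iio.eventually_mem (show a ∈ Set.Iio (0:ℝ) from h)] with x hx
    simp only [spow, Real.sign_of_neg hx, Pi.neg_apply]; ring
  · have h0 : spow 0 p = 0 := by simp [spow, Real.sign_zero]
    rw [ContinuousAt, h0]
    have hb : ∀ x : ℝ, ‖spow x p‖ ≤ |x| ^ p := fun x => abs_spow_le x p
    have hgt : Filter.Tendsto (fun x : ℝ => |x| ^ p) (𝓝 0) (𝓝 0) := by
      have := hg.tendsto 0
      simpa [Real.zero_rpow hp.ne'] using this
    exact squeeze_zero_norm hb hgt
  · refine hg.continuousAt.congr ?_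
    filter_upwards [isOpen_Ioi.eventually_mem (show a ∈ Set.Ioi (0:ℝ) from h)] with x hx
    simp only [spow, Real.sign_of_pos hx]; ring

lemma sphere_abs_le (s : Sphere2) : |s.1.1| ≤ 1 ∧ |s.1.2| ≤ 1 := by
  have h := s.2
  constructor <;>
    nlinarith [sq_abs s.1.1, sq_abs s.1.2, abs_nonneg s.1.1, abs_nonneg s.1.2,
      sq_nonneg s.1.1, sq_nonneg s.1.2]

lemma lin_bound (c1 c2 : ℝ) (s : Sphere2) : |c1 * s.1.1 + c2 * s.1.2| ≤ |c1| + |c2| := by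
  obtain ⟨h1, h2⟩ := sphere_abs_le s
  calc |c1 * s.1.1 + c2 * s.1.2| ≤ |c1 * s.1.1| + |c2 * s.1.2| := abs_add_le _ _
    _ ≤ |c1| + |c2| := by
        rw [abs_mul, abs_mul]
        nlinarith [abs_nonneg c1, abs_nonneg c2]

lemma pow_rpow_swap (x : ℝ) (hx : 0 ≤ x) (j : ℕ) (p : ℝ) :
    ((x ^ j : ℝ)) ^ p = (x ^ p) ^ j := by
  rw [← Real.rpow_natCast x j, ← Real.rpow_mul hx, mul_comm, Real.rpow_mul hx,
    Real.rpow_natCast]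

end Aux

theorem CV_pos_asymptotic_case_I
    (Γ : Measure Sphere2) [IsFiniteMeasure Γ]
    (α a1 a2 a3 a4 l1 l2 : ℝ) (hα1 : 1 < α) (hα2 : α < 2)
    (hl1 : l1 ^ 2 - (a1 + a4) * l1 + (a1 * a4 - a2 * a3) = 0)
    (hl2 : l2 ^ 2 - (a1 + a4) * l2 + (a1 * a4 - a2 * a3) = 0)
    (hne : l1 ≠ l2) (habs1 : |l1| < 1) (habs2 : |l2| < 1)
    (hgt : |l2| < |l1|) :
    Tendsto (fun h : ℕ => CVpos Γ α a1 a2 a3 a4 l1 l2 h / spow (l1 ^ h) (α - 1)) atTop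
      (𝓝 (D7 Γ α a1 a2 a3 a4 l1 l2)) := by
  haveI : OpensMeasurableSpace Sphere2 :=
    Subtype.opensMeasurableSpace {x : ℝ × ℝ | x.1 ^ 2 + x.2 ^ 2 = 1}
  have hp : 0 < α - 1 := by linarith
  have hl1ne : l1 ≠ 0 := by
    intro h
    rw [h, abs_zero] at hgt
    exact (abs_nonneg l2).not_gt hgt
  have hl1pos : 0 < |l1| := abs_pos.2 hl1ne
  set r : ℝ := l2 / l1 with hr_def
  have hr : |r| < 1 := by
    rw [hr_def, abs_div, div_lt_one hl1pos]; exact hgt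
  have hd : l2 - l1 ≠ 0 := sub_ne_zero.2 (Ne.symm hne)
  have hdpos : 0 < |l2 - l1| := abs_pos.2 hd
  set KA : ℝ := (|a3| + |l2 - a4|) / |l2 - l1| with hKAdef
  set KB : ℝ := (|a3| + |a4 - l1|) / |l2 - l1| with hKBdef
  set KC : ℝ := (|l2 - a1| + |a2| + (|a1 - l1| + |a2|)) / |l2 - l1| with hKCdef
  have hKA0 : 0 ≤ KA := by rw [hKAdef]; positivity
  have hKB0 : 0 ≤ KB := by rw [hKBdef]; positivity
  have hKC0 : 0 ≤ KC := by rw [hKCdef]; positivity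
  -- pointwise bounds
  have hA : ∀ (j : ℕ) (s : Sphere2), |A3 a1 a2 a3 a4 l1 l2 j s| ≤ |l1| ^ j * KA := by
    intro j s
    have e : A3 a1 a2 a3 a4 l1 l2 j s
        = l1 ^ j * ((-a3) * s.1.1 + (l2 - a4) * s.1.2) / (l2 - l1) := by
      unfold A3; ring
    rw [e, abs_div, abs_mul, abs_pow, hKAdef, ← mul_div_assoc]
    have := lin_bound (-a3) (l2 - a4) s
    rw [abs_neg] at this
    gcongr
  have hB : ∀ (j : ℕ) (s : Sphere2), |B3 a1 a2 a3 a4 l1 l2 j s| ≤ |l1| ^ j * KB := by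
    intro j s
    have e : B3 a1 a2 a3 a4 l1 l2 j s
        = l2 ^ j * (a3 * s.1.1 + (a4 - l1) * s.1.2) / (l2 - l1) := by
      unfold B3; ring
    rw [e, abs_div, abs_mul, abs_pow, hKBdef, ← mul_div_assoc]
    have h1 := lin_bound a3 (a4 - l1) s
    have h2 : |l2| ^ j ≤ |l1| ^ j := pow_le_pow_left₀ (abs_nonneg l2) hgt.le j
    gcongr
  have hC : ∀ (j : ℕ) (s : Sphere2), |C3 a1 a2 a3 a4 l1 l2 j s| ≤ |l1| ^ j * KC := by
    intro j s
    have e : C3 a1 a2 a3 a4 l1 l2 j s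
        = (l1 ^ j * ((l2 - a1) * s.1.1 + (-a2) * s.1.2)
            + l2 ^ j * ((a1 - l1) * s.1.1 + a2 * s.1.2)) / (l2 - l1) := by
      unfold C3; ring
    rw [e, abs_div, hKCdef, ← mul_div_assoc]
    have h1 := lin_bound (l2 - a1) (-a2) s
    rw [abs_neg] at h1
    have h2 := lin_bound (a1 - l1) a2 s
    have h3 : |l2| ^ j ≤ |l1| ^ j := pow_le_pow_left₀ (abs_nonneg l2) hgt.le j
    have hnum : |l1 ^ j * ((l2 - a1) * s.1.1 + (-a2) * s.1.2)
        + l2 ^ j * ((a1 - l1) * s.1.1 + a2 * s.1.2)|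
        ≤ |l1| ^ j * (|l2 - a1| + |a2| + (|a1 - l1| + |a2|)) := by
      calc |l1 ^ j * ((l2 - a1) * s.1.1 + (-a2) * s.1.2)
          + l2 ^ j * ((a1 - l1) * s.1.1 + a2 * s.1.2)|
          ≤ |l1 ^ j * ((l2 - a1) * s.1.1 + (-a2) * s.1.2)|
            + |l2 ^ j * ((a1 - l1) * s.1.1 + a2 * s.1.2)| := abs_add_le _ _
        _ ≤ |l1| ^ j * (|l2 - a1| + |a2|) + |l1| ^ j * (|a1 - l1| + |a2|) := by
            rw [abs_mul, abs_mul, abs_pow, abs_pow]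
            gcongr
        _ = |l1| ^ j * (|l2 - a1| + |a2| + (|a1 - l1| + |a2|)) := by ring
    gcongr
  -- bound on the combination
  have hAB : ∀ (j h : ℕ) (s : Sphere2),
      |A3 a1 a2 a3 a4 l1 l2 j s + r ^ h * B3 a1 a2 a3 a4 l1 l2 j s|
        ≤ |l1| ^ j * (KA + KB) := by
    intro j h s
    have hr1 : |r ^ h| ≤ 1 := by
      rw [abs_pow]; exact pow_le_one₀ (abs_nonneg r) hr.le
    calc |A3 a1 a2 a3 a4 l1 l2 j s + r ^ h * B3 a1 a2 a3 a4 l1 l2 j s|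
        ≤ |A3 a1 a2 a3 a4 l1 l2 j s| + |r ^ h| * |B3 a1 a2 a3 a4 l1 l2 j s| := by
          rw [← abs_mul]; exact abs_add_le _ _
      _ ≤ |l1| ^ j * KA + 1 * (|l1| ^ j * KB) := by
          have hb := hB j s
          have ha := hA j s
          have hBnn : (0:ℝ) ≤ |B3 a1 a2 a3 a4 l1 l2 j s| := abs_nonneg _
          nlinarith [abs_nonneg (r ^ h), abs_nonneg (A3 a1 a2 a3 a4 l1 l2 j s)]
      _ = |l1| ^ j * (KA + KB) := by ring
  set q : ℝ := |l1| * |l1| ^ (α - 1) with hq_def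
  have hq0 : 0 ≤ q := by rw [hq_def]; positivity
  have hq1 : q < 1 := by
    have h1 : |l1| ^ (α - 1) ≤ 1 := Real.rpow_le_one (abs_nonneg l1) habs1.le hp.le
    have : q ≤ |l1| := by
      rw [hq_def]
      exact mul_le_of_le_one_right (abs_nonneg l1) h1
    exact lt_of_le_of_lt this habs1
  -- master pointwise bound
  have hmaster : ∀ (j h : ℕ) (s : Sphere2),
      ‖C3 a1 a2 a3 a4 l1 l2 j s
        * spow (A3 a1 a2 a3 a4 l1 l2 j s + r ^ h * B3 a1 a2 a3 a4 l1 l2 j s) (α - 1)‖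
        ≤ KC * (KA + KB) ^ (α - 1) * q ^ j := by
    intro j h s
    rw [Real.norm_eq_abs, abs_mul]
    have h2 : |spow (A3 a1 a2 a3 a4 l1 l2 j s + r ^ h * B3 a1 a2 a3 a4 l1 l2 j s) (α - 1)|
        ≤ (|l1| ^ j * (KA + KB)) ^ (α - 1) :=
      (abs_spow_le _ _).trans (Real.rpow_le_rpow (abs_nonneg _) (hAB j h s) hp.le)
    calc |C3 a1 a2 a3 a4 l1 l2 j s|
          * |spow (A3 a1 a2 a3 a4 l1 l2 j s + r ^ h * B3 a1 a2 a3 a4 l1 l2 j s) (α - 1)|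
        ≤ (|l1| ^ j * KC) * ((|l1| ^ j * (KA + KB)) ^ (α - 1)) :=
          mul_le_mul (hC j s) h2 (abs_nonneg _) (by positivity)
      _ = KC * (KA + KB) ^ (α - 1) * q ^ j := by
          rw [Real.mul_rpow (by positivity) (by positivity),
            pow_rpow_swap |l1| (abs_nonneg l1) j (α - 1), hq_def, mul_pow]
          ring
  -- continuity of the coefficient functions
  have hcont1 : Continuous fun s : Sphere2 => s.1.1 := continuous_fst.comp continuous_subtype_val
  have hcont2 : Continuous fun s : Sphere2 => s.1.2 := continuous_snd.comp continuous_subtype_val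
  have hcA : ∀ j : ℕ, Continuous fun s : Sphere2 => A3 a1 a2 a3 a4 l1 l2 j s := by
    intro j; unfold A3
    exact (((continuous_const.mul hcont1).neg.add
      (continuous_const.mul hcont2)).sub (continuous_const.mul hcont2)).div_const _
  have hcB : ∀ j : ℕ, Continuous fun s : Sphere2 => B3 a1 a2 a3 a4 l1 l2 j s := by
    intro j; unfold B3
    exact (((continuous_const.mul hcont1).sub
      (continuous_const.mul hcont2)).add (continuous_const.mul hcont2)).div_const _
  have hcC : ∀ j : ℕ, Continuous fun s : Sphere2 => C3 a1 a2 a3 a4 l1 l2 j s := by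
    intro j; unfold C3
    apply Continuous.div_const
    apply Continuous.add
    · exact continuous_const.mul (((continuous_const.mul hcont1).sub
        (continuous_const.mul hcont1)).sub (continuous_const.mul hcont2))
    · exact continuous_const.mul (((continuous_const.mul hcont1).neg.add
        (continuous_const.mul hcont1)).add (continuous_const.mul hcont2))
  -- rewrite the quotient
  have key : ∀ h : ℕ, CVpos Γ α a1 a2 a3 a4 l1 l2 h / spow (l1 ^ h) (α - 1)
      = ∑' j : ℕ, ∫ s, C3 a1 a2 a3 a4 l1 l2 j s
          * spow (A3 a1 a2 a3 a4 l1 l2 j s + r ^ h * B3 a1 a2 a3 a4 l1 l2 j s) (α - 1) ∂Γ := by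
    intro h
    have hc : spow (l1 ^ h) (α - 1) ≠ 0 := spow_ne_zero (pow_ne_zero h hl1ne) _
    have hl1r : l1 * r = l2 := by rw [hr_def]; field_simp
    have e : ∀ (j : ℕ) (s : Sphere2),
        C3 a1 a2 a3 a4 l1 l2 j s
          * spow (l1 ^ h * A3 a1 a2 a3 a4 l1 l2 j s + l2 ^ h * B3 a1 a2 a3 a4 l1 l2 j s) (α - 1)
        = spow (l1 ^ h) (α - 1) * (C3 a1 a2 a3 a4 l1 l2 j s
            * spow (A3 a1 a2 a3 a4 l1 l2 j s + r ^ h * B3 a1 a2 a3 a4 l1 l2 j s) (α - 1)) := by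
      intro j s
      have e2 : l1 ^ h * A3 a1 a2 a3 a4 l1 l2 j s + l2 ^ h * B3 a1 a2 a3 a4 l1 l2 j s
          = l1 ^ h * (A3 a1 a2 a3 a4 l1 l2 j s + r ^ h * B3 a1 a2 a3 a4 l1 l2 j s) := by
        rw [← hl1r, mul_pow]; ring
      rw [e2, spow_mul_eq]; ring
    rw [CVpos]
    simp only [e, MeasureTheory.integral_const_mul, tsum_mul_left]
    exact mul_div_cancel_left₀ _ hc
  simp only [key]
  rw [D7]
  refine tendsto_tsum_of_dominated_convergence
    (bound := fun j : ℕ => KC * (KA + KB) ^ (α - 1) * q ^ j * (Γ Set.univ).toReal) ?_ ?_ ?_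
  · exact ((summable_geometric_of_lt_one hq0 hq1).mul_left _).mul_right _
  · intro j
    refine MeasureTheory.tendsto_integral_of_dominated_convergence
      (fun _ : Sphere2 => KC * (KA + KB) ^ (α - 1) * q ^ j) ?_ ?_ ?_ ?_
    · intro h
      exact ((hcC j).mul ((continuous_spow hp).comp
        ((hcA j).add (continuous_const.mul (hcB j))))).aestronglyMeasurable
    · exact MeasureTheory.integrable_const _
    · intro h
      exact Filter.Eventually.of_forall (fun s => hmaster j h s)
    · refine Filter.Eventually.of_forall (fun s => ?_)
      have t1 : Tendsto (fun h : ℕ => A3 a1 a2 a3 a4 l1 l2 j s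
          + r ^ h * B3 a1 a2 a3 a4 l1 l2 j s) atTop (𝓝 (A3 a1 a2 a3 a4 l1 l2 j s)) := by
        have h2 := (tendsto_pow_atTop_nhds_zero_of_abs_lt_one hr).mul_const
          (B3 a1 a2 a3 a4 l1 l2 j s)
        simpa using tendsto_const_nhds.add h2
      have t2 : Tendsto (fun h : ℕ =>
          spow (A3 a1 a2 a3 a4 l1 l2 j s + r ^ h * B3 a1 a2 a3 a4 l1 l2 j s) (α - 1))
          atTop (𝓝 (spow (A3 a1 a2 a3 a4 l1 l2 j s) (α - 1))) :=
        (((continuous_spow hp).tendsto _).comp t1)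
      exact tendsto_const_nhds.mul t2
  · refine Filter.Eventually.of_forall (fun h => fun j => ?_)
    exact MeasureTheory.norm_integral_le_of_norm_le_const
      (Filter.Eventually.of_forall (fun s => hmaster j h s))
end
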